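/- arXiv:2510.27618 — 7 statements merged into one kernel-verified Lean document; each statement's English description precedes it below -/
import Mathlib

section
/- Assuming the Continuum Hypothesis, there exist two subsets A⁰, A¹ of the real line, each dense in itself with no least or greatest element and such that every open interval between two of their elements meets the set in exactly ℵ₁ points, which are incomparable under order-preserving embeddings: there is no order-preserving injection from A⁰ into A¹ and none from A¹ into A⁰. -/
/-!
Under CH there are only `ℵ₁` functions `ℚ → ℝ`, and a monotone map `ℝ → ℝ` is recovered from its
restriction to `ℚ` at each of its (all but countably many) points of continuity. So we can list
maps `F β`, `β < ω₁`, covering every monotone map in this sense, and choose by transfinite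
recursion distinct reals `x i`, each in a prescribed rational interval, such that `x j` is never
`F β` of an earlier point when `β ≤ j`, and `F β (x i)` equals an earlier point only when that
point has a nontrivial fibre under `F β`. Splitting the indices into two uncountable halves spread
over all rational intervals gives the sets `A` and `B`. An increasing `f : A → B` extends to a
monotone map, listed as some `F β`; for uncountably many `i ≥ β` it sends `x i` to an earlier
point with a nontrivial fibre. A monotone map has only countably many nontrivial fibres, and
`f` is injective: contradiction.
-/

/-- A set of reals is `ω₁`-dense if it has no least and no greatest element and every open
interval between two of its elements meets it in exactly `ℵ₁` points. -/
def IsOmega1Dense (A : Set ℝ) : Prop :=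
  (∀ a ∈ A, ∃ b ∈ A, b < a) ∧ (∀ a ∈ A, ∃ b ∈ A, a < b) ∧
  ∀ a ∈ A, ∀ b ∈ A, a < b → Cardinal.mk ↥(A ∩ Set.Ioo a b) = Cardinal.aleph 1

open Cardinal Set Function

noncomputable def ratSupExtension (g : ℚ → ℝ) (x : ℝ) : ℝ :=
  sSup (g '' {q | (q : ℝ) < x})

theorem monotone_ratSupExtension {g : ℚ → ℝ} (hg : Monotone g) :
    Monotone (ratSupExtension g) := by
  intro x y hxy
  obtain ⟨q₀, hq₀⟩ := exists_rat_lt x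
  obtain ⟨q₁, hq₁⟩ := exists_rat_gt y
  refine csSup_le_csSup ⟨g q₁, ?_⟩ ⟨g q₀, q₀, hq₀, rfl⟩ (image_mono fun q hq => hq.trans_le hxy)
  rintro _ ⟨q, hq, rfl⟩
  exact hg (by exact_mod_cast (hq.trans hq₁).le)

theorem ratSupExtension_eq_of_continuousAt {F : ℝ → ℝ} (hF : Monotone F) {x : ℝ}
    (hx : ContinuousAt F x) : ratSupExtension (fun q : ℚ => F q) x = F x := by
  obtain ⟨q₀, hq₀⟩ := exists_rat_lt x
  have hle : ∀ y ∈ (fun q : ℚ => F q) '' {q | (q : ℝ) < x}, y ≤ F x := by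
    rintro _ ⟨q, hq, rfl⟩
    exact hF hq.le
  refine le_antisymm (csSup_le ⟨F q₀, q₀, hq₀, rfl⟩ hle) (le_of_forall_lt fun c hc => ?_)
  obtain ⟨l, u, hxlu, hlu⟩ :=
    mem_nhds_iff_exists_Ioo_subset.1 (hx.eventually (eventually_gt_nhds hc))
  obtain ⟨q, hlq, hqx⟩ := exists_rat_btwn hxlu.1
  exact (hlu ⟨hlq, hqx.trans hxlu.2⟩).trans_le (le_csSup ⟨F x, hle⟩ ⟨q, hqx, rfl⟩)

theorem Monotone.exists_monotone_extension_of_unbounded {α β : Type*} [LinearOrder α]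
    [ConditionallyCompleteLattice β] {A : Set α} {f : A → β} (hf : Monotone f)
    (hbelow : ¬BddBelow A) (habove : ¬BddAbove A) :
    ∃ g : α → β, Monotone g ∧ ∀ a : A, g a = f a := by
  have hne : ∀ x : α, (f '' {a | (a : α) ≤ x}).Nonempty := fun x => by
    obtain ⟨a, ha, hax⟩ := not_bddBelow_iff.1 hbelow x
    exact ⟨f ⟨a, ha⟩, ⟨a, ha⟩, hax.le, rfl⟩
  have hbdd : ∀ x : α, BddAbove (f '' {a | (a : α) ≤ x}) := fun x => by
    obtain ⟨a, ha, hxa⟩ := not_bddAbove_iff.1 habove x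
    refine ⟨f ⟨a, ha⟩, ?_⟩
    rintro _ ⟨b, hb, rfl⟩
    exact hf (show (b : α) ≤ a from hb.trans hxa.le)
  refine ⟨fun x => sSup (f '' {a | (a : α) ≤ x}), fun x y hxy => ?_, fun a => ?_⟩
  · exact csSup_le_csSup (hbdd y) (hne x) (image_mono fun a ha => le_trans ha hxy)
  · refine le_antisymm (csSup_le (hne a) ?_) (le_csSup (hbdd a) ⟨a, le_refl (a : α), rfl⟩)
    rintro _ ⟨b, hb, rfl⟩
    exact hf hb

theorem Monotone.countable_setOf_nontrivial_preimage {F : ℝ → ℝ} (hF : Monotone F) :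
    {y | (F ⁻¹' {y}).Nontrivial}.Countable := by
  refine (countable_range fun q : ℚ => F q).mono fun y hy => ?_
  obtain ⟨x₁, hx₁, x₂, hx₂, hne⟩ := hy
  wlog hlt : x₁ < x₂ generalizing x₁ x₂
  · exact this x₂ hx₂ x₁ hx₁ hne.symm (hne.lt_or_gt.resolve_left hlt)
  obtain ⟨q, hq₁, hq₂⟩ := exists_rat_btwn hlt
  exact ⟨q, le_antisymm (hx₂ ▸ hF hq₂.le) (hx₁ ▸ hF hq₁.le)⟩

theorem countable_setOf_subsingleton_preimage {α β : Type*} (f : α → β) {P : Set β}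
    (hP : P.Countable) : {z | f z ∈ P ∧ (f ⁻¹' {f z}).Subsingleton}.Countable := by
  have hfiber : ∀ y, {z | f z = y ∧ (f ⁻¹' {y}).Subsingleton}.Subsingleton :=
    fun y z₁ h₁ z₂ h₂ => h₁.2 h₁.1 h₂.1
  refine (hP.biUnion fun y _ => (hfiber y).countable).mono fun z hz => mem_biUnion hz.1 ?_
  exact ⟨rfl, hz.2⟩

def IsUncountablyDense (A : Set ℝ) : Prop :=
  ∀ a b : ℝ, a < b → ¬(A ∩ Ioo a b).Countable

namespace IsUncountablyDense

variable {A : Set ℝ} (hA : IsUncountablyDense A)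
include hA

theorem exists_mem_Ioo {a b : ℝ} (hab : a < b) : ∃ c ∈ A, c ∈ Ioo a b := by
  by_contra! h
  exact hA a b hab (countable_empty.mono fun c hc => h c hc.1 hc.2)

theorem not_countable : ¬A.Countable :=
  fun h => hA 0 1 one_pos (h.mono inter_subset_left)

theorem not_bddAbove : ¬BddAbove A := by
  rintro ⟨M, hM⟩
  obtain ⟨c, hc, hMc, -⟩ := hA.exists_mem_Ioo (lt_add_one M)
  exact hMc.not_ge (hM hc)

theorem not_bddBelow : ¬BddBelow A := by
  rintro ⟨M, hM⟩
  obtain ⟨c, hc, -, hcM⟩ := hA.exists_mem_Ioo (sub_one_lt M)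
  exact hcM.not_ge (hM hc)

theorem isOmega1Dense (CH : continuum.{0} = ℵ₁) : IsOmega1Dense A := by
  refine ⟨fun a _ => ?_, fun a _ => ?_, fun a _ b _ hab => le_antisymm ?_ ?_⟩
  · obtain ⟨c, hc, -, hca⟩ := hA.exists_mem_Ioo (sub_one_lt a)
    exact ⟨c, hc, hca⟩
  · obtain ⟨c, hc, hac, -⟩ := hA.exists_mem_Ioo (lt_add_one a)
    exact ⟨c, hc, hac⟩
  · exact (mk_set_le _).trans (mk_real.trans CH).le
  · rw [aleph_one_le_iff, ← not_le, le_aleph0_iff_set_countable]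
    exact hA a b hab

end IsUncountablyDense

theorem exists_forall_image_Iio_of_forall_range {ι α : Type*} [Preorder ι] [WellFoundedLT ι]
    (p : ι → Set α → α → Prop) (hp : ∀ i (y : Iio i → α), ∃ z, p i (range y) z) :
    ∃ x : ι → α, ∀ i, p i (x '' Iio i) (x i) := by
  choose step hstep using hp
  let x : ι → α := wellFounded_lt.fix fun i prev => step i fun j => prev j j.2
  refine ⟨x, fun i => ?_⟩
  rw [show x i = step i (fun j => x j) from wellFounded_lt.fix_eq _ i, image_eq_range]
  exact hstep i _

def CoversMonotoneMaps {ι : Type*} (F : ι → ℝ → ℝ) : Prop :=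
  ∀ g : ℝ → ℝ, Monotone g → ∃ β, Monotone (F β) ∧ ∀ z, ContinuousAt g z → F β z = g z

structure AvoidsEnumeration {ι : Type*} [Preorder ι] (F : ι → ℝ → ℝ) (x : ι → ℝ) : Prop where
  ne_apply : ∀ ⦃β i j⦄, β ≤ j → i < j → x j ≠ F β (x i)
  nontrivial_preimage : ∀ ⦃β i j⦄, β ≤ i → j < i → F β (x i) = x j → (F β ⁻¹' {x j}).Nontrivial

theorem exists_injective_avoidsEnumeration {ι : Type*} [LinearOrder ι] [WellFoundedLT ι]
    (hcount : ∀ i : ι, (Iio i).Countable) (F : ι → ℝ → ℝ) {I : ι → Set ℝ}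
    (hI : ∀ i, ¬(I i).Countable) :
    ∃ x : ι → ℝ, Injective x ∧ (∀ i, x i ∈ I i) ∧ AvoidsEnumeration F x := by
  let bad (i : ι) (P : Set ℝ) : Set ℝ :=
    P ∪ ⋃ β ∈ Iic i, (F β '' P ∪ {z | F β z ∈ P ∧ (F β ⁻¹' {F β z}).Subsingleton})
  obtain ⟨x, hx⟩ := exists_forall_image_Iio_of_forall_range (fun i P z => z ∈ I i \ bad i P)
    fun i y => by
      have hP : (range y).Countable := by
        have := (hcount i).to_subtype
        exact countable_range y
      have hbad : (bad i (range y)).Countable := by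
        refine hP.union (((Iio_insert (a := i)) ▸ (hcount i).insert i).biUnion fun β _ => ?_)
        exact (hP.image _).union (countable_setOf_subsingleton_preimage _ hP)
      exact sdiff_nonempty.2 fun h => hI i (hbad.mono h)
  refine ⟨x, Injective.of_lt_imp_ne fun i j hij h => (hx j).2 (Or.inl ⟨i, hij, h⟩),
    fun i => (hx i).1, ⟨fun β i j hβ hij h => ?_, fun β i j hβ hji h => ?_⟩⟩
  · exact (hx j).2 (Or.inr (mem_biUnion hβ (Or.inl ⟨x i, ⟨i, hij, rfl⟩, h.symm⟩)))
  · refine not_subsingleton_iff.1 fun hsub => (hx i).2 (Or.inr (mem_biUnion hβ (Or.inr ?_)))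
    exact ⟨h ▸ ⟨j, hji, rfl⟩, h ▸ hsub⟩

theorem AvoidsEnumeration.not_exists_strictMono {ι : Type*} [LinearOrder ι]
    (hcount : ∀ i : ι, (Iio i).Countable) {F : ι → ℝ → ℝ} (hF : CoversMonotoneMaps F)
    {x : ι → ℝ} (hFx : AvoidsEnumeration F x) (hx : Injective x) {S S' : Set ι}
    (hSS' : Disjoint S S') (hS : IsUncountablyDense (x '' S)) :
    ¬∃ f : x '' S → x '' S', StrictMono f := by
  rintro ⟨f, hf⟩
  obtain ⟨g, hg, hgf⟩ := (show Monotone fun a => (f a : ℝ) from fun a b h => hf.monotone h)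
    |>.exists_monotone_extension_of_unbounded hS.not_bddBelow hS.not_bddAbove
  obtain ⟨β, hβ, hβg⟩ := hF g hg
  let T := {i ∈ S | β ≤ i ∧ ContinuousAt g (x i)}
  have hT : ¬T.Countable := by
    refine fun hT => hS.not_countable ((((hcount β).union
      (hg.countable_not_continuousAt.preimage hx)).union hT).image x |>.mono (image_mono ?_))
    intro i hi
    by_cases hβi : β ≤ i
    · by_cases hc : ContinuousAt g (x i)
      · exact Or.inr ⟨hi, hβi, hc⟩
      · exact Or.inl (Or.inr hc)
    · exact Or.inl (Or.inl (not_le.1 hβi))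
  have hval : ∀ i (hi : i ∈ T), F β (x i) = f ⟨x i, mem_image_of_mem x hi.1⟩ :=
    fun i hi => (hβg _ hi.2.2).trans (hgf ⟨x i, _⟩)
  refine hT (MapsTo.countable_of_injOn (f := fun i => F β (x i)) (fun i hi => ?_) ?_
    hβ.countable_setOf_nontrivial_preimage)
  · obtain ⟨j, hj, hxj⟩ := (f ⟨x i, mem_image_of_mem x hi.1⟩).2
    have hij : F β (x i) = x j := (hval i hi).trans hxj.symm
    have hji : j < i := lt_of_le_of_ne
      (not_lt.1 fun hlt => hFx.ne_apply (hi.2.1.trans hlt.le) hlt hij.symm)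
      (hSS'.ne_of_mem hi.1 hj).symm
    show (F β ⁻¹' {F β (x i)}).Nontrivial
    exact hij ▸ hFx.nontrivial_preimage hi.2.1 hji hij
  · intro i hi i' hi' h
    exact hx (congrArg Subtype.val (hf.injective (Subtype.ext ((hval i hi).symm.trans
      (h.trans (hval i' hi'))))))

abbrev Omega1 : Type := (ℵ₁ : Cardinal.{0}).ord.ToType

namespace Omega1

theorem mk_eq : #Omega1 = ℵ₁ :=
  mk_ord_toType _

theorem countable_Iio (i : Omega1) : (Iio i).Countable := by
  rw [← le_aleph0_iff_set_countable, ← lt_aleph_one_iff]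
  exact (mk_Iio_lt i (by simp)).trans_eq mk_eq

instance : Uncountable Omega1 := by
  rw [← aleph0_lt_mk_iff, mk_eq]
  exact aleph0_lt_aleph_one

theorem nonempty_equiv_prod (K : Type) [Countable K] [Nonempty K] :
    Nonempty (Omega1 ≃ K × Omega1) := by
  rw [← Cardinal.eq, mk_prod, lift_id, lift_id, mk_eq]
  exact (Cardinal.mul_eq_right (aleph0_le_aleph 1) (mk_le_aleph0.trans (aleph0_le_aleph 1))
    (mk_ne_zero K)).symm

theorem exists_monotone_enumeration (CH : continuum.{0} = ℵ₁) :
    ∃ F : Omega1 → ℝ → ℝ, CoversMonotoneMaps F := by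
  have hle : #(ℚ → ℝ) ≤ #Omega1 := by
    rw [mk_eq, ← CH]
    simp [mk_real, continuum_power_aleph0]
  obtain ⟨e⟩ := hle
  refine ⟨fun β => ratSupExtension (invFun e β), fun g hg => ?_⟩
  obtain ⟨β, hβ⟩ := invFun_surjective e.injective fun q : ℚ => g q
  refine ⟨β, ?_, fun z hz => ?_⟩
  · simp only [hβ]
    exact monotone_ratSupExtension fun q q' h => hg (by exact_mod_cast h)
  · simp only [hβ]
    exact ratSupExtension_eq_of_continuousAt hg hz

theorem exists_incomparable_isUncountablyDense (CH : continuum.{0} = ℵ₁) :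
    ∃ A B : Set ℝ, IsUncountablyDense A ∧ IsUncountablyDense B ∧
      (¬∃ f : A → B, StrictMono f) ∧ ¬∃ f : B → A, StrictMono f := by
  obtain ⟨F, hF⟩ := exists_monotone_enumeration CH
  have : Nonempty {pq : ℚ × ℚ // pq.1 < pq.2} := ⟨⟨(0, 1), one_pos⟩⟩
  obtain ⟨e⟩ := nonempty_equiv_prod (Bool × {pq : ℚ × ℚ // pq.1 < pq.2})
  obtain ⟨x, hx, hxI, hFx⟩ := exists_injective_avoidsEnumeration countable_Iio F
    (I := fun i => Ioo ((e i).1.2.1.1 : ℝ) (e i).1.2.1.2)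
    fun i => by simpa using (e i).1.2.2
  let S (b : Bool) : Set Omega1 := {i | (e i).1.1 = b}
  have hdense (b : Bool) : IsUncountablyDense (x '' S b) := by
    intro a c hac hcount
    obtain ⟨p, hap, hpc⟩ := exists_rat_btwn hac
    obtain ⟨q, hpq, hqc⟩ := exists_rat_btwn hpc
    let t : Bool × {pq : ℚ × ℚ // pq.1 < pq.2} := (b, ⟨(p, q), by exact_mod_cast hpq⟩)
    refine not_countable_univ (MapsTo.countable_of_injOn (f := fun w => x (e.symm (t, w)))
      (fun w _ => ?_) (fun w _ w' _ h => ?_) hcount)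
    · have hw := hxI (e.symm (t, w))
      simp only [Equiv.apply_symm_apply, mem_Ioo] at hw
      exact ⟨⟨_, by simp [S, t], rfl⟩, hap.trans hw.1, hw.2.trans hqc⟩
    · simpa using hx h
  have hdisj : Disjoint (S false) (S true) := disjoint_left.2 fun i h h' => by simp_all [S]
  exact ⟨_, _, hdense false, hdense true,
    hFx.not_exists_strictMono countable_Iio hF hx hdisj (hdense false),
    hFx.not_exists_strictMono countable_Iio hF hx hdisj.symm (hdense true)⟩

end Omega1

/-- Sierpiński. Assuming the Continuum Hypothesis, there are two
`ω₁`-dense sets of reals which are incomparable under order-preserving embeddings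
(strictly monotone increasing injections). -/
theorem sierpinski_incomparable_omega1Dense (CH : Cardinal.continuum = Cardinal.aleph 1) :
    ∃ A B : Set ℝ, IsOmega1Dense A ∧ IsOmega1Dense B ∧
      (¬ ∃ f : A → B, StrictMono f) ∧ (¬ ∃ f : B → A, StrictMono f) := by
  have CH₀ : continuum.{0} = ℵ₁ := lift_injective (by simpa using CH)
  obtain ⟨A, B, hA, hB, hAB, hBA⟩ := Omega1.exists_incomparable_isUncountablyDense CH₀
  exact ⟨A, B, hA.isOmega1Dense CH₀, hB.isOmega1Dense CH₀, hAB, hBA⟩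
end

section
/- If the slender tree property SP(ω₁, ω₂, ω₂) holds (every ω₁-slender (ω₂,ω₂)-list has a cofinal branch), then there are no weak ω₁-Kurepa trees, i.e., the weak Kurepa Hypothesis at ω₁ fails. -/
universe u v

/-- `C` is a closed unbounded subset of `P_κ(B)`, the subsets of `B` of size `< κ`. -/
def IsClubIn {β : Type v} (κ : Cardinal.{v}) (B : Set β) (C : Set (Set β)) : Prop :=
  (∀ A ∈ C, A ⊆ B ∧ Cardinal.mk ↥A < κ) ∧
  (∀ A : Set β, A ⊆ B → Cardinal.mk ↥A < κ → ∃ D ∈ C, A ⊆ D) ∧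
  (∀ D : Set (Set β), D ⊆ C → D.Nonempty → IsChain (· ⊆ ·) D →
    Cardinal.mk ↥D < κ → ⋃₀ D ∈ C)

/-- A `(κ,λ)`-list is *`μ`-slender* if (for all sufficiently large `θ`) there is a club of
models `M ∈ P_κ(H(θ))` such that for all `y ∈ M ∩ P_μ(λ)` we have `d (M ∩ λ) ∩ y ∈ M`.
Here the relevant part of `H(θ)` is modelled by `λ ⊕ P(λ)`: a model `M` is a small set of
ordinals `< λ` (left summands) and of subsets of `λ` (right summands); `M ∩ λ` is the set
of left summands of `M`. -/
def IsSlenderList (μ κ : Cardinal.{0}) (lam : Ordinal.{0})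
    (d : Set lam.ToType → Set lam.ToType) : Prop :=
  ∃ C : Set (Set (lam.ToType ⊕ Set lam.ToType)), IsClubIn κ Set.univ C ∧
    ∀ M ∈ C, ∀ y : Set lam.ToType, Sum.inr y ∈ M → Cardinal.mk ↥y < μ →
      Sum.inr (d {o : lam.ToType | Sum.inl o ∈ M} ∩ y) ∈ M

/-- `b` is a cofinal branch of the `(κ,λ)`-list `d`: for every `x ∈ P_κ(λ)` there is
`z ⊇ x` in `P_κ(λ)` with `b ∩ x = d z ∩ x`. -/
def IsCofBranch (κ : Cardinal.{0}) (lam : Ordinal.{0})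
    (d : Set lam.ToType → Set lam.ToType) (b : Set lam.ToType) : Prop :=
  ∀ x : Set lam.ToType, Cardinal.mk ↥x < κ →
    ∃ z : Set lam.ToType, Cardinal.mk ↥z < κ ∧ x ⊆ z ∧ b ∩ x = d z ∩ x

/-- In a partial order in which the predecessors of every element are well-ordered
(i.e. a tree), the rank (level) of an element is the order type of its set of
predecessors. -/
noncomputable def treeRank {α : Type u} [PartialOrder α]
    (hwo : ∀ x : α, IsWellOrder {y : α // y < x} (· < ·)) (x : α) : Ordinal.{u} :=
  @Ordinal.type {y : α // y < x} (· < ·) (hwo x)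

/-!
Embed a tree `T` with `ℵ₂` cofinal branches `B_β` (`β < ω₂`) into `ω₂` by `e`, and consider the
list which, on a small `x ⊇ ran e`, guesses `d_x = e[B_β]` for some `β ∉ x`. A cofinal branch `b`
would give `b ∩ ran e = e[B_β]` for `β` outside any prescribed small set, which contradicts the
injectivity of `β ↦ B_β`. The list is `ω₁`-slender: for countable `y`, `e[B_β] ∩ y = e[↓t] ∩ y`
for a node `t ∈ B_β` above the levels of all nodes in `e⁻¹[y]`, and the small models closed
under `y ↦ e[↓t] ∩ y` form a club.
-/

open Cardinal Set

section Tree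

variable {α : Type u} [PartialOrder α] (hwo : ∀ x : α, IsWellOrder {y : α // y < x} (· < ·))

theorem treeRank_lt_treeRank {a b : α} (h : a < b) : treeRank hwo a < treeRank hwo b := by
  let f : @PrincipalSeg {y : α // y < a} {y : α // y < b} (· < ·) (· < ·) :=
    ⟨⟨⟨fun y => ⟨y, y.2.trans h⟩, fun _ _ hxy => Subtype.ext (Subtype.mk.inj hxy)⟩,
      Iff.rfl⟩, ⟨a, h⟩, fun c => ⟨by rintro ⟨x, rfl⟩; exact x.2, fun hc => ⟨⟨c, hc⟩, rfl⟩⟩⟩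
  have := hwo a
  have := hwo b
  exact f.ordinal_type_lt

theorem le_of_treeRank_le {a b : α} (hab : a ≤ b ∨ b ≤ a)
    (hr : treeRank hwo a ≤ treeRank hwo b) : a ≤ b :=
  hab.elim id fun hba => hba.lt_or_eq.elim
    (fun h => absurd hr (treeRank_lt_treeRank hwo h).not_ge) (·.ge)

theorem le_total_of_le_of_le (hwo : ∀ x : α, IsWellOrder {y : α // y < x} (· < ·))
    {a b t : α} (ha : a ≤ t) (hb : b ≤ t) : a ≤ b ∨ b ≤ a := by
  rcases ha.lt_or_eq with ha | rfl
  · rcases hb.lt_or_eq with hb | rfl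
    · rcases @trichotomous _ (· < ·) (hwo t).toTrichotomous ⟨a, ha⟩ ⟨b, hb⟩ with h | h | h
      · exact .inl (Subtype.mk_lt_mk.1 h).le
      · exact .inl (congrArg Subtype.val h).le
      · exact .inr (Subtype.mk_lt_mk.1 h).le
    · exact .inl ha.le
  · exact .inr hb

theorem eq_of_le_of_le_of_treeRank_eq {a b t : α} (ha : a ≤ t) (hb : b ≤ t)
    (h : treeRank hwo a = treeRank hwo b) : a = b :=
  le_antisymm (le_of_treeRank_le hwo (le_total_of_le_of_le hwo ha hb) h.le)
    (le_of_treeRank_le hwo (le_total_of_le_of_le hwo hb ha) h.ge)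

theorem mem_iff_le_of_treeRank_le {C : Set α} (hC : IsChain (· ≤ ·) C) {t u : α} (ht : t ∈ C)
    (hu : ∃ c ∈ C, treeRank hwo c = treeRank hwo u) (hut : treeRank hwo u ≤ treeRank hwo t) :
    u ∈ C ↔ u ≤ t := by
  have hle : ∀ c ∈ C, treeRank hwo c ≤ treeRank hwo t → c ≤ t := fun c hc =>
    le_of_treeRank_le hwo (hC.total hc ht)
  refine ⟨fun huC => hle u huC hut, fun hut' => ?_⟩
  obtain ⟨c, hc, hcu⟩ := hu
  rwa [eq_of_le_of_le_of_treeRank_eq hwo hut' (hle c hc (hcu ▸ hut)) hcu.symm]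

theorem exists_mem_inter_eq_Iic_inter {o : Ordinal.{u}} (hrank : ∀ x, treeRank hwo x < o)
    {C : Set α} (hC : IsChain (· ≤ ·) C) (hCo : ∀ β < o, ∃ x ∈ C, treeRank hwo x = β)
    {Y : Set α} (hY : #Y < o.cof) : ∃ t ∈ C, C ∩ Y = Iic t ∩ Y := by
  obtain ⟨t, ht, htr⟩ := hCo _ (Ordinal.iSup_lt_of_lt_cof hY fun u : Y => hrank u)
  refine ⟨t, ht, ?_⟩
  ext u
  simp only [mem_inter_iff, mem_Iic, and_congr_left_iff]
  intro huY
  refine mem_iff_le_of_treeRank_le hwo hC ht (hCo _ (hrank u)) ?_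
  rw [htr]
  exact Ordinal.le_iSup (fun u : Y => treeRank hwo u) ⟨u, huY⟩

theorem exists_image_inter_eq_image_Iic_inter {L : Type v} (e : α ↪ L) {o : Ordinal.{u}}
    (hrank : ∀ x, treeRank hwo x < o) {C : Set α} (hC : IsChain (· ≤ ·) C)
    (hCo : ∀ β < o, ∃ x ∈ C, treeRank hwo x = β) {y : Set L}
    (hy : lift.{u} #y < lift.{v} o.cof) : ∃ t ∈ C, e '' C ∩ y = e '' Iic t ∩ y := by
  have hY : #(e ⁻¹' y) < o.cof := by
    rw [← lift_lt.{u, v}]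
    exact (mk_preimage_of_injective_lift e y e.injective).trans_lt hy
  obtain ⟨t, ht, hCt⟩ := exists_mem_inter_eq_Iic_inter hwo hrank hC hCo hY
  exact ⟨t, ht, by rw [← image_inter_preimage, hCt, image_inter_preimage]⟩

end Tree

theorem exists_superset_mk_le_forall_subset {σ : Type u} (h : σ → Set σ) {c : Cardinal.{u}}
    (hc : ℵ₀ ≤ c) (hh : ∀ a, #(h a) ≤ c) {A : Set σ} (hA : #A ≤ c) :
    ∃ M, A ⊆ M ∧ #M ≤ c ∧ ∀ a ∈ M, h a ⊆ M := by
  let step : Set σ → Set σ := fun S => S ∪ ⋃ a ∈ S, h a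
  have hstep : ∀ S : Set σ, #S ≤ c → #(step S) ≤ c := fun S hS =>
    (mk_union_le _ _).trans <| add_le_of_le hc hS <|
      (mk_biUnion_le h S).trans (mul_le_of_le hc hS (ciSup_le' fun a => hh a))
  have hiter : ∀ n, #(step^[n] A) ≤ c := fun n => by
    induction n with
    | zero => exact hA
    | succ n ih => exact Function.iterate_succ_apply' step n A ▸ hstep _ ih
  refine ⟨⋃ n : ULift.{u} ℕ, step^[n.down] A, subset_iUnion_of_subset ⟨0⟩ subset_rfl, ?_, ?_⟩
  · refine (mk_iUnion_le _).trans (mul_le_of_le hc ?_ (ciSup_le' fun n => hiter n.down))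
    simpa using hc
  · intro a ha
    obtain ⟨⟨n⟩, hn⟩ := mem_iUnion.1 ha
    refine subset_iUnion_of_subset ⟨n + 1⟩ ?_
    rw [Function.iterate_succ_apply']
    exact subset_union_right.trans' (subset_biUnion_of_mem (u := h) hn)

theorem nonempty_compl_of_mk_lt {L : Type u} {x : Set L} (hx : #x < #L) : xᶜ.Nonempty :=
  nonempty_compl.2 fun h => by rw [h, mk_univ] at hx; exact hx.false

section Club

variable {L : Type v}

def IsClosedModel (X : Set L) (Q : Set (Set L)) (M : Set (L ⊕ Set L)) : Prop :=
  X ⊆ Sum.inl ⁻¹' M ∧ ∀ y, Sum.inr y ∈ M → ∀ q ∈ Q, Sum.inr (q ∩ y) ∈ M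

theorem isClubIn_isClosedModel {c : Cardinal.{v}} (hc : ℵ₀ ≤ c) {X : Set L} (hX : #X ≤ c)
    {Q : Set (Set L)} (hQ : #Q ≤ c) :
    IsClubIn (Order.succ c) univ {M | #M ≤ c ∧ IsClosedModel X Q M} := by
  refine ⟨fun M hM => ⟨subset_univ M, Order.lt_succ_of_le hM.1⟩, fun A _ hA => ?_,
    fun D hD hDne _ hDc => ?_⟩
  · let hcl : L ⊕ Set L → Set (L ⊕ Set L) :=
      Sum.elim (fun _ => ∅) fun y => (fun q => Sum.inr (q ∩ y)) '' Q
    have hhcl : ∀ m, #(hcl m) ≤ c := by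
      rintro (w | y)
      · simp [hcl]
      · exact mk_image_le.trans hQ
    have hAX : #(A ∪ Sum.inl '' X : Set (L ⊕ Set L)) ≤ c :=
      (mk_union_le _ _).trans (add_le_of_le hc (Order.lt_succ_iff.1 hA) (mk_image_le.trans hX))
    obtain ⟨M, hAXM, hMc, hMcl⟩ := exists_superset_mk_le_forall_subset hcl hc hhcl hAX
    refine ⟨M, ⟨hMc, fun w hw => hAXM (.inr ⟨w, hw, rfl⟩), fun y hy q hq => ?_⟩,
      subset_union_left.trans hAXM⟩
    exact hMcl _ hy ⟨q, hq, rfl⟩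
  · refine ⟨(mk_sUnion_le D).trans (mul_le_of_le hc (Order.lt_succ_iff.1 hDc)
      (ciSup_le' fun M => (hD M.2).1)), fun w hw => ?_, fun y hy q hq => ?_⟩
    · obtain ⟨M, hM⟩ := hDne
      exact ⟨M, hM, (hD hM).2.1 hw⟩
    · obtain ⟨M, hM, hyM⟩ := hy
      exact ⟨M, hM, (hD hM).2.2 y hyM q hq⟩

end Club

section GuessList

variable {L : Type u}

noncomputable def guessList (F : L → Set L) (X x : Set L) : Set L :=
  open Classical in if h : X ⊆ x ∧ xᶜ.Nonempty then F h.2.some ∩ x else ∅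

theorem guessList_subset (F : L → Set L) (X x : Set L) : guessList F X x ⊆ x := by
  unfold guessList
  split_ifs
  exacts [inter_subset_right, empty_subset x]

theorem exists_guessList_eq {F : L → Set L} {X : Set L} (hF : ∀ β, F β ⊆ X) {x : Set L}
    (hX : X ⊆ x) (hx : xᶜ.Nonempty) : ∃ β ∉ x, guessList F X x = F β :=
  ⟨hx.some, hx.some_mem, by rw [guessList, dif_pos ⟨hX, hx⟩, inter_eq_left.2 ((hF _).trans hX)]⟩

end GuessList

theorem not_isCofBranch_guessList {κ : Cardinal.{0}} {lam : Ordinal.{0}} (hκ : ℵ₀ ≤ κ)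
    (hlam : κ ≤ #lam.ToType) {F : lam.ToType → Set lam.ToType} (hFinj : F.Injective)
    {X : Set lam.ToType} (hF : ∀ β, F β ⊆ X) (hX : #X < κ) (b : Set lam.ToType) :
    ¬ IsCofBranch κ lam (guessList F X) b := by
  intro hb
  have hguess : ∀ x : Set lam.ToType, #x < κ → X ⊆ x → ∃ β ∉ x, b ∩ X = F β := by
    intro x hx hXx
    obtain ⟨z, hz, hxz, hbz⟩ := hb x hx
    obtain ⟨β, hβ, hd⟩ :=
      exists_guessList_eq hF (hXx.trans hxz) (nonempty_compl_of_mk_lt (hz.trans_le hlam))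
    refine ⟨β, fun h => hβ (hxz h), ?_⟩
    calc b ∩ X = b ∩ x ∩ X := by rw [inter_assoc, inter_eq_right.2 hXx]
      _ = F β := by rw [hbz, hd, inter_assoc, inter_eq_right.2 hXx, inter_eq_left.2 (hF β)]
  obtain ⟨β₁, -, h₁⟩ := hguess X hX subset_rfl
  have hX₁ : #(insert β₁ X : Set lam.ToType) < κ :=
    mk_insert_le.trans_lt (add_lt_of_lt hκ hX (one_lt_aleph0.trans_le hκ))
  obtain ⟨β₂, hβ₂, h₂⟩ := hguess _ hX₁ (subset_insert β₁ X)
  exact hβ₂ (hFinj (h₂.symm.trans h₁) ▸ mem_insert β₁ X)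

theorem isSlenderList_guessList {μ c : Cardinal.{0}} {lam : Ordinal.{0}} (hc : ℵ₀ ≤ c)
    (hlam : Order.succ c ≤ #lam.ToType) {F : lam.ToType → Set lam.ToType} {X : Set lam.ToType}
    (hF : ∀ β, F β ⊆ X) (hX : #X ≤ c) {Q : Set (Set lam.ToType)} (hQ : #Q ≤ c)
    (hFQ : ∀ β (y : Set lam.ToType), #y < μ → ∃ q ∈ Q, F β ∩ y = q ∩ y) :
    IsSlenderList μ (Order.succ c) lam (guessList F X) := by
  refine ⟨_, isClubIn_isClosedModel hc hX hQ, ?_⟩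
  rintro M ⟨hMc, hXM, hMQ⟩ y hy hyμ
  have hMl : #(Sum.inl ⁻¹' M) < #lam.ToType :=
    ((mk_preimage_of_injective _ _ Sum.inl_injective).trans hMc).trans_lt
      ((Order.lt_succ_of_le le_rfl).trans_le hlam)
  obtain ⟨β, -, hd⟩ := exists_guessList_eq hF hXM (nonempty_compl_of_mk_lt hMl)
  obtain ⟨q, hq, hFq⟩ := hFQ β y hyμ
  change Sum.inr (guessList F X (Sum.inl ⁻¹' M) ∩ y) ∈ M
  rw [hd, hFq]
  exact hMQ y hy q hq

/-- If the slender tree property `SP(ω₁, ω₂, ω₂)` holds — every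
`ω₁`-slender `(ω₂,ω₂)`-list has a cofinal branch — then the weak Kurepa Hypothesis at `ω₁`
fails: there is no tree of height `ω₁` and size `≤ ω₁` with at least `ω₂`-many cofinal
branches. -/
theorem SP_implies_no_weak_Kurepa_tree
    (hSP : ∀ d : Set (Cardinal.aleph 2).ord.ToType → Set (Cardinal.aleph 2).ord.ToType,
      (∀ x, d x ⊆ x) →
      IsSlenderList (Cardinal.aleph 1) (Cardinal.aleph 2) (Cardinal.aleph 2).ord d →
      ∃ b, IsCofBranch (Cardinal.aleph 2) (Cardinal.aleph 2).ord d b) :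
    ∀ (α : Type u) [inst : PartialOrder α]
      (hwo : ∀ x : α, IsWellOrder {y : α // y < x} (· < ·)),
      (∀ x : α, treeRank hwo x < (Cardinal.aleph 1).ord) →
      (∀ β < (Cardinal.aleph 1).ord, ∃ x : α, treeRank hwo x = β) →
      Cardinal.mk α ≤ Cardinal.aleph 1 →
      Cardinal.mk {C : Set α // IsChain (· ≤ ·) C ∧
        ∀ β < (Cardinal.aleph 1).ord, ∃ x ∈ C, treeRank hwo x = β} < Cardinal.aleph 2 := by
  intro α _ hwo hrank _ hsize
  by_contra! hbranches
  have hL : #(ℵ_ 2).ord.ToType = ℵ_ 2 := mk_ord_toType _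
  have hsucc : ℵ_ 2 = Order.succ ℵ₁ := by rw [succ_aleph, one_add_one_eq_two]
  have hL' : lift.{u} #(ℵ_ 2).ord.ToType = ℵ_ 2 := by simp
  have h12 : ℵ₁ < ℵ_ 2 := aleph_lt_aleph.2 one_lt_two
  obtain ⟨e⟩ := lift_mk_le'.1 (((lift_le_aleph_one.2 hsize).trans h12.le).trans hL'.ge)
  obtain ⟨B, hB⟩ := lift_mk_le'.1 (hL'.trans_le (hbranches.trans_eq (lift_uzero _).symm))
  have hrange : ∀ {τ : Type} (f : α → τ), #(range f) ≤ ℵ₁ := fun f =>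
    lift_le_aleph_one.1 (mk_range_le_lift.trans (lift_le_aleph_one.2 hsize))
  let F := fun β => e '' (B β).1
  have hFinj : F.Injective :=
    (image_injective.2 e.injective).comp (Subtype.val_injective.comp hB)
  have hF : ∀ β, F β ⊆ range e := fun β => image_subset_range _ _
  have hFQ : ∀ β (y : Set (ℵ_ 2).ord.ToType), #y < ℵ₁ →
      ∃ q ∈ range fun t => e '' Iic t, F β ∩ y = q ∩ y := fun β y hy => by
    obtain ⟨t, -, ht⟩ := exists_image_inter_eq_image_Iic_inter hwo e hrank (B β).2.1 (B β).2.2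
      (by simpa [isRegular_aleph_one.cof_ord] using hy)
    exact ⟨_, mem_range_self t, ht⟩
  have hslender := isSlenderList_guessList (aleph0_le_aleph 1) (hL.trans hsucc).ge hF
    (hrange e) (hrange _) hFQ
  rw [← hsucc] at hslender
  obtain ⟨b, hb⟩ := hSP (guessList F (range e)) (guessList_subset F _) hslender
  exact not_isCofBranch_guessList (aleph0_le_aleph 2) hL.ge hFinj hF
    ((hrange e).trans_lt (aleph_lt_aleph.2 one_lt_two)) b hb
end

section
/- If RP(κ) holds for a regular cardinal κ ≥ ω₂, then every stationary subset of { α < κ : cf(α) = ω } reflects at an ordinal of cofinality ω₁; that is, there is γ < κ of cofinality ω₁ such that S ∩ γ is stationary in γ. -/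
/-- `C` is a closed unbounded (club) subset of the ordinal `γ`. -/
def OClub (γ : Ordinal.{0}) (C : Set Ordinal.{0}) : Prop :=
  C ⊆ Set.Iio γ ∧ (∀ β < γ, ∃ c ∈ C, β < c) ∧
  ∀ δ < γ, (C ∩ Set.Iio δ).Nonempty → sSup (C ∩ Set.Iio δ) = δ → δ ∈ C

/-- `S` is a stationary subset of the ordinal `γ`: it meets every club of `γ`. -/
def OStat (γ : Ordinal.{0}) (S : Set Ordinal.{0}) : Prop :=
  ∀ C, OClub γ C → (S ∩ C).Nonempty

/-- `S` is a stationary family of countable subsets of `B` (stationary in `[B]^ω`):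
for every function `F` from finite subsets of `B` to `B` there is a countable subset of `B`
in `S` closed under `F`. -/
def FamStat (B : Set Ordinal.{0}) (S : Set (Set Ordinal.{0})) : Prop :=
  ∀ F : Finset Ordinal.{0} → Ordinal.{0}, (∀ e : Finset Ordinal.{0}, ↑e ⊆ B → F e ∈ B) →
    ∃ x ∈ S, x ⊆ B ∧ x.Countable ∧ ∀ e : Finset Ordinal.{0}, ↑e ⊆ x → F e ∈ x

/-!
Let `T` be the family of countable `x ⊆ κ` with `sup x ∈ S`. It is stationary in `[κ]^ω`: the
closure points of any `F` form a club in `κ`, so some `δ ∈ S` is one, and closing a countable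
cofinal subset of `δ` under `F` yields an `x ∈ T` closed under `F`. RP reflects `T` to some `I`
whose supremum `γ` has cofinality `ω₁` and which contains a club `D` of `γ`. Given a club `C` of
`γ`, reflection provides `x ⊆ I` in `T` closed under a map sending each point to a larger point of
`C ∩ D`; then `δ = sup x` lies in `S`, is below `γ` because `cf δ = ω`, and lies in `C` as a limit
of points of `C`.
-/

open Cardinal Ordinal Set

theorem Cardinal.mk_finset_le_max (α : Type*) : #(Finset α) ≤ max ℵ₀ #α := by
  cases finite_or_infinite α
  · exact mk_le_aleph0.trans (le_max_left _ _)
  · rw [mk_finset_of_infinite]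
    exact le_max_right _ _

theorem Finset.exists_mem_subset_Iio {α : Type*} [LinearOrder α] {X : Set α} {δ : α}
    (hX : X.Nonempty) (hδ : ∀ a < δ, ∃ x ∈ X, a < x) {e : Finset α} (he : ↑e ⊆ Set.Iio δ) :
    ∃ x ∈ X, ↑e ⊆ Set.Iio x := by
  obtain rfl | hne := e.eq_empty_or_nonempty
  · obtain ⟨x, hx⟩ := hX
    exact ⟨x, hx, by simp⟩
  · obtain ⟨x, hx, hlt⟩ := hδ _ (he (e.max'_mem hne))
    exact ⟨x, hx, fun a ha => (e.le_max' a ha).trans_lt hlt⟩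

theorem Ordinal.exists_lt_apply_lt_nfp {f : Ordinal → Ordinal} {γ a b : Ordinal}
    (hf : ∀ c < γ, c < f c) (hlt : nfp f a < γ) (hb : b < nfp f a) :
    ∃ u < nfp f a, b < u ∧ f u < nfp f a := by
  obtain ⟨n, hn⟩ := lt_nfp_iff.1 hb
  have hle : f^[n + 1] a ≤ nfp f a := iterate_le_nfp f a (n + 1)
  have hfu : f (f^[n] a) < nfp f a :=
    calc f (f^[n] a) = f^[n + 1] a := (Function.iterate_succ_apply' f n a).symm
      _ < f (f^[n + 1] a) := hf _ (hle.trans_lt hlt)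
      _ = f^[n + 2] a := (Function.iterate_succ_apply' f (n + 1) a).symm
      _ ≤ nfp f a := iterate_le_nfp f a (n + 2)
  exact ⟨f^[n] a, (hf _ ((iterate_le_nfp f a n).trans_lt hlt)).trans hfu, hn, hfu⟩

theorem OClub.mem_of_forall_lt {γ δ : Ordinal} {C : Set Ordinal} (hC : OClub γ C) (hδ : δ < γ)
    (hδ0 : δ ≠ 0) (h : ∀ b < δ, ∃ c ∈ C, b < c ∧ c < δ) : δ ∈ C := by
  obtain ⟨c₀, hc₀, -, hc₀δ⟩ := h 0 (pos_iff_ne_zero.2 hδ0)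
  refine hC.2.2 δ hδ ⟨c₀, hc₀, hc₀δ⟩ ?_
  refine csSup_eq_of_forall_le_of_forall_lt_exists_gt ⟨c₀, hc₀, hc₀δ⟩
    (fun c hc => le_of_lt hc.2) fun b hb => ?_
  obtain ⟨c, hc, hbc, hcδ⟩ := h b hb
  exact ⟨c, ⟨hc, hcδ⟩, hbc⟩

theorem OClub.inter {γ : Ordinal} {C D : Set Ordinal} (hγ : ℵ₀ < γ.cof) (hC : OClub γ C)
    (hD : OClub γ D) : OClub γ (C ∩ D) := by
  refine ⟨fun c hc => hC.1 hc.1, fun β hβ => ?_, fun δ hδ hne hsup => ?_⟩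
  · choose! c hcC hc using hC.2.1
    choose! d hdD hd using hD.2.1
    have hcγ : ∀ b < γ, c b < γ := fun b hb => hC.1 (hcC b hb)
    have hdcγ : ∀ b < γ, d (c b) < γ := fun b hb => hD.1 (hdD _ (hcγ b hb))
    have hinfl : ∀ b < γ, b < d (c b) := fun b hb => (hc b hb).trans (hd _ (hcγ b hb))
    set ε := nfp (d ∘ c) β
    have hεγ : ε < γ := nfp_lt_ord hγ hdcγ hβ
    have hβε : β < ε := (hinfl β hβ).trans_le (iterate_le_nfp (d ∘ c) β 1)
    have hε0 : ε ≠ 0 := fun h => by simp [h] at hβε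
    refine ⟨ε, ⟨hC.mem_of_forall_lt hεγ hε0 fun b hb => ?_,
      hD.mem_of_forall_lt hεγ hε0 fun b hb => ?_⟩, hβε⟩
    · obtain ⟨u, huε, hbu, hu⟩ := exists_lt_apply_lt_nfp hinfl hεγ hb
      have huγ : u < γ := huε.trans hεγ
      exact ⟨c u, hcC u huγ, hbu.trans (hc u huγ), (hd _ (hcγ u huγ)).trans hu⟩
    · obtain ⟨u, huε, hbu, hu⟩ := exists_lt_apply_lt_nfp hinfl hεγ hb
      exact ⟨d (c u), hdD _ (hcγ u (huε.trans hεγ)), hbu.trans (hinfl u (huε.trans hεγ)), hu⟩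
  · have hδ0 : δ ≠ 0 := by
      obtain ⟨c, -, hcδ⟩ := hne
      exact (pos_of_gt hcδ).ne'
    have hcof : ∀ b < δ, ∃ c ∈ C ∩ D, b < c ∧ c < δ := fun b hb => by
      obtain ⟨c, ⟨hc, hcδ⟩, hbc⟩ := exists_lt_of_lt_csSup hne (hsup.symm ▸ hb)
      exact ⟨c, hc, hbc, hcδ⟩
    exact ⟨hC.mem_of_forall_lt hδ hδ0 fun b hb => (hcof b hb).imp fun c h => ⟨h.1.1, h.2⟩,
      hD.mem_of_forall_lt hδ hδ0 fun b hb => (hcof b hb).imp fun c h => ⟨h.1.2, h.2⟩⟩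

def FinClosed (F : Finset Ordinal.{0} → Ordinal.{0}) (x : Set Ordinal.{0}) : Prop :=
  ∀ e : Finset Ordinal.{0}, ↑e ⊆ x → F e ∈ x

theorem exists_lt_ord_forall_finset_lt {κ : Cardinal.{0}} (hκ : ℵ₀ < κ) (hreg : κ.IsRegular)
    {F : Finset Ordinal.{0} → Ordinal.{0}} (hF : FinClosed F (Set.Iio κ.ord))
    {b : Ordinal.{0}} (hb : b < κ.ord) :
    ∃ b' < κ.ord, ∀ e : Finset Ordinal.{0}, ↑e ⊆ Set.Iio b → F e < b' := by
  classical
  let G : Finset (Set.Iio b) → Ordinal.{0} := fun t => F (t.map (Function.Embedding.subtype _))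
  have hG : ∀ t, G t < κ.ord := fun t => hF _ fun a ha => by
    obtain ⟨a, -, rfl⟩ := Finset.mem_map.1 ha
    exact a.2.trans hb
  refine ⟨⨆ t, G t + 1, lift_iSup_add_one_lt_of_lt_cof ?_ hG, fun e he => ?_⟩
  · rw [Cardinal.lift_uzero, ← lift_cof, hreg.cof_ord]
    refine (mk_finset_le_max _).trans_lt (max_lt (by simpa using hκ) ?_)
    rw [Cardinal.mk_Iio_ordinal, Cardinal.lift_lt]
    exact lt_ord.1 hb
  · have hbdd : BddAbove (Set.range fun t => G t + 1) := by
      refine ⟨κ.ord, ?_⟩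
      rintro _ ⟨t, rfl⟩
      exact Order.add_one_le_of_lt (hG t)
    have he' : (e.subtype (· ∈ Set.Iio b)).map (Function.Embedding.subtype _) = e :=
      Finset.subtype_map_of_mem fun a ha => he ha
    calc F e < F e + 1 := lt_add_one _
      _ = G (e.subtype (· ∈ Set.Iio b)) + 1 := by rw [show G _ = F e from congrArg F he']
      _ ≤ ⨆ t, G t + 1 := le_ciSup hbdd _

theorem oclub_setOf_finClosed_Iio {κ : Cardinal.{0}} (hκ : ℵ₀ < κ) (hreg : κ.IsRegular)
    {F : Finset Ordinal.{0} → Ordinal.{0}} (hF : FinClosed F (Set.Iio κ.ord)) :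
    OClub κ.ord {δ | δ < κ.ord ∧ FinClosed F (Set.Iio δ)} := by
  refine ⟨fun δ hδ => hδ.1, fun β hβ => ?_, fun δ hδ hne hsup => ⟨hδ, fun e he => ?_⟩⟩
  · have hstep : ∀ b < κ.ord, ∃ b' < κ.ord, b < b' ∧
        ∀ e : Finset Ordinal.{0}, ↑e ⊆ Set.Iio b → F e < b' := by
      intro b hb
      obtain ⟨b', hb'κ, hb'⟩ := exists_lt_ord_forall_finset_lt hκ hreg hF hb
      refine ⟨max b' (b + 1), max_lt hb'κ ((isSuccLimit_ord hreg.aleph0_le).add_one_lt hb),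
        lt_max_of_lt_right (lt_add_one b), fun e he => lt_max_of_lt_left (hb' e he)⟩
    choose! f hfκ hf hfF using hstep
    set ε := nfp f β
    have hεκ : ε < κ.ord := nfp_lt_ord (hreg.cof_ord.symm ▸ hκ) hfκ hβ
    have hβε : β < ε := (hf β hβ).trans_le (iterate_le_nfp f β 1)
    have hcofinal : ∀ b < ε, ∃ u ∈ {u | u < ε ∧ f u < ε}, b < u := fun b hb => by
      obtain ⟨u, huε, hbu, hu⟩ := exists_lt_apply_lt_nfp hf hεκ hb
      exact ⟨u, ⟨huε, hu⟩, hbu⟩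
    refine ⟨ε, ⟨hεκ, fun e he => ?_⟩, hβε⟩
    obtain ⟨u, ⟨huε, hu⟩, heu⟩ :=
      Finset.exists_mem_subset_Iio ((hcofinal β hβε).imp fun u h => h.1) hcofinal he
    exact (hfF u (huε.trans hεκ) e heu).trans hu
  · obtain ⟨c, ⟨⟨-, hc⟩, hcδ⟩, hec⟩ := Finset.exists_mem_subset_Iio hne
      (fun b hb => exists_lt_of_lt_csSup hne (hsup.symm ▸ hb)) he
    exact (hc e hec).trans (Set.mem_Iio.1 hcδ)

def finClosureStep (F : Finset Ordinal.{0} → Ordinal.{0}) (t : Set Ordinal.{0}) :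
    Set Ordinal.{0} :=
  t ∪ F '' {e | ↑e ⊆ t}

def finClosure (F : Finset Ordinal.{0} → Ordinal.{0}) (s : Set Ordinal.{0}) : Set Ordinal.{0} :=
  ⋃ n, (finClosureStep F)^[n] s

section finClosure

variable {F : Finset Ordinal.{0} → Ordinal.{0}} {s : Set Ordinal.{0}}

theorem subset_finClosure : s ⊆ finClosure F s :=
  subset_iUnion (fun n => (finClosureStep F)^[n] s) 0

theorem Set.Countable.finClosureStep {t : Set Ordinal.{0}} (ht : t.Countable) :
    (finClosureStep F t).Countable := by
  have hfin : {e : Finset Ordinal.{0} | ↑e ⊆ t}.Countable :=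
    ((countable_ofPred_finite_subset ht).preimage Finset.coe_injective).mono
      fun e he => by exact ⟨e.finite_toSet, he⟩
  exact ht.union (hfin.image F)

theorem Set.Countable.finClosure (hs : s.Countable) : (finClosure F s).Countable := by
  refine countable_iUnion fun n => ?_
  induction n with
  | zero => exact hs
  | succ n ih =>
    rw [Function.iterate_succ_apply']
    exact ih.finClosureStep

theorem finClosure_subset {B : Set Ordinal.{0}} (hsB : s ⊆ B) (hB : FinClosed F B) :
    finClosure F s ⊆ B := by
  refine iUnion_subset fun n => ?_
  induction n with
  | zero => exact hsB
  | succ n ih =>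
    rw [Function.iterate_succ_apply']
    exact union_subset ih (image_subset_iff.2 fun e he => hB e (he.trans ih))

theorem finClosed_finClosure : FinClosed F (finClosure F s) := fun e he => by
  have hmono : Monotone fun n => (finClosureStep F)^[n] s :=
    monotone_nat_of_le_succ fun n => by
      rw [Function.iterate_succ_apply']
      exact subset_union_left
  obtain ⟨n, hn⟩ := hmono.directed_le.exists_mem_subset_of_finset_subset_biUnion he
  exact mem_iUnion.2 ⟨n + 1, by
    rw [Function.iterate_succ_apply']
    exact Or.inr ⟨e, hn, rfl⟩⟩

end finClosure

theorem Ordinal.exists_countable_subset_Iio_cofinal {δ : Ordinal.{0}} (hδ : δ.cof = ℵ₀) :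
    ∃ s ⊆ Set.Iio δ, s.Countable ∧ ∀ b < δ, ∃ a ∈ s, b < a := by
  obtain ⟨s, hs, hcard⟩ := Order.exists_cof_eq (Set.Iio δ)
  rw [cof_Iio, ← lift_cof, hδ, lift_aleph0] at hcard
  have hlim : Order.IsSuccLimit δ := one_lt_cof_iff.1 (hδ ▸ one_lt_aleph0)
  refine ⟨Subtype.val '' s, image_subset_iff.2 fun a _ => a.2,
    (countable_coe_iff.1 (mk_le_aleph0_iff.1 hcard.le)).image _, fun b hb => ?_⟩
  obtain ⟨a, has, hba⟩ := hs ⟨b + 1, hlim.add_one_lt hb⟩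
  exact ⟨a, mem_image_of_mem _ has, Order.add_one_le_iff.1 hba⟩

theorem exists_countable_finClosed_sSup_eq {F : Finset Ordinal.{0} → Ordinal.{0}}
    {δ : Ordinal.{0}} (hδ : δ.cof = ℵ₀) (hF : FinClosed F (Set.Iio δ)) :
    ∃ x ⊆ Set.Iio δ, x.Countable ∧ FinClosed F x ∧ sSup x = δ := by
  obtain ⟨s, hsδ, hs, hcof⟩ := exists_countable_subset_Iio_cofinal hδ
  have hxδ := finClosure_subset hsδ hF
  refine ⟨finClosure F s, hxδ, hs.finClosure, finClosed_finClosure, ?_⟩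
  obtain ⟨a, ha, -⟩ := hcof 0 (cof_pos.1 (hδ ▸ aleph0_pos))
  refine csSup_eq_of_forall_le_of_forall_lt_exists_gt ⟨a, subset_finClosure ha⟩
    (fun a ha => (hxδ ha).le) fun b hb => ?_
  obtain ⟨a, ha, hba⟩ := hcof b hb
  exact ⟨a, subset_finClosure ha, hba⟩

theorem famStat_setOf_sSup_mem {κ : Cardinal.{0}} (hκ : ℵ₀ < κ) (hreg : κ.IsRegular)
    {S : Set Ordinal.{0}} (hS : ∀ α ∈ S, α.cof = ℵ₀) (hstat : OStat κ.ord S) :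
    FamStat (Set.Iio κ.ord) {x | x ⊆ Set.Iio κ.ord ∧ x.Countable ∧ sSup x ∈ S} := by
  intro F hF
  obtain ⟨δ, hδS, hδκ, hδF⟩ := hstat _ (oclub_setOf_finClosed_Iio hκ hreg hF)
  obtain ⟨x, hxδ, hx, hxF, hsup⟩ := exists_countable_finClosed_sSup_eq (hS δ hδS) hδF
  have hxκ : x ⊆ Set.Iio κ.ord := fun a ha => (Set.mem_Iio.1 (hxδ ha)).trans hδκ
  exact ⟨x, ⟨hxκ, hx, hsup ▸ hδS⟩, hxκ, hx, hxF⟩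

theorem ostat_inter_Iio_of_famStat {γ : Ordinal.{0}} {I D S : Set Ordinal.{0}}
    {R : Set (Set Ordinal.{0})} (hγ : ℵ₀ < γ.cof) (hI : I ⊆ Set.Iic γ) (hD : OClub γ D)
    (hDI : D ⊆ I) (hS : ∀ α ∈ S, α.cof = ℵ₀) (hR : ∀ x ∈ R, sSup x ∈ S)
    (hstat : FamStat I R) : OStat γ (S ∩ Set.Iio γ) := by
  intro C hC
  have hCD := hC.inter hγ hD
  obtain ⟨c₀, hc₀, -⟩ := hCD.2.1 0 (cof_pos.1 (aleph0_pos.trans hγ))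
  have hnext : ∀ a, ∃ c ∈ C ∩ D, a < γ → a < c := fun a => by
    by_cases ha : a < γ
    · obtain ⟨c, hc, hac⟩ := hCD.2.1 a ha
      exact ⟨c, hc, fun _ => hac⟩
    · exact ⟨c₀, hc₀, fun h => absurd h ha⟩
  choose g hgCD hg using hnext
  -- only the values on singletons matter
  obtain ⟨x, hxR, hxI, -, hxg⟩ := hstat (fun e => g (e.sup id)) fun e _ => hDI (hgCD _).2
  have hgx : ∀ a ∈ x, g a ∈ x := fun a ha => by simpa using hxg {a} (by simpa using ha)
  have hxne : x.Nonempty := ⟨_, hxg ∅ (by simp)⟩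
  have hbdd : BddAbove x := ⟨γ, fun a ha => hI (hxI ha)⟩
  set δ := sSup x
  have hδcof : δ.cof = ℵ₀ := hS δ (hR x hxR)
  have hδγ : δ < γ := (csSup_le' fun a ha => hI (hxI ha)).lt_of_ne fun h => by
    rw [← h, hδcof] at hγ
    exact hγ.false
  have hxγ : ∀ a ∈ x, a < γ := fun a ha => (le_csSup hbdd ha).trans_lt hδγ
  have hδC : δ ∈ C := by
    refine hC.mem_of_forall_lt hδγ (fun h => aleph0_ne_zero (hδcof.symm.trans (cof_eq_zero.2 h)))
      fun b hb => ?_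
    obtain ⟨a, ha, hba⟩ := exists_lt_of_lt_csSup hxne hb
    have hga := hgx a ha
    exact ⟨g a, (hgCD a).1, hba.trans (hg a (hxγ a ha)),
      (hg _ (hxγ _ hga)).trans_le (le_csSup hbdd (hgx _ hga))⟩
  exact ⟨δ, ⟨hR x hxR, hδγ⟩, hδC⟩

/-- If the Reflection Principle `RP(κ)` holds for a regular cardinal
`κ ≥ ω₂`, then every stationary subset of `{α < κ | cf(α) = ω}` reflects at an ordinal of
cofinality `ω₁`. -/
theorem RP_implies_stationary_reflection (κ : Cardinal.{0})
    (hreg : κ.IsRegular) (hκ : Cardinal.aleph 2 ≤ κ)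
    (hRP : ∀ S : Set (Set Ordinal.{0}),
      (∀ x ∈ S, x ⊆ Set.Iio κ.ord ∧ x.Countable) → FamStat (Set.Iio κ.ord) S →
      ∃ I : Set Ordinal.{0}, I ⊆ Set.Iio κ.ord ∧
        Cardinal.mk ↥I = Cardinal.aleph 1 ∧
        Set.Iio ((Cardinal.aleph 1 : Cardinal.{0}).ord) ⊆ I ∧
        (sSup I).cof = Cardinal.aleph 1 ∧
        (∃ D ⊆ I, OClub (sSup I) D) ∧
        FamStat I {x ∈ S | x ⊆ I}) :
    ∀ S : Set Ordinal.{0}, S ⊆ {α | α < κ.ord ∧ α.cof = Cardinal.aleph0} →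
      OStat κ.ord S →
      ∃ γ < κ.ord, γ.cof = Cardinal.aleph 1 ∧ OStat γ (S ∩ Set.Iio γ) := by
  intro S hS hstat
  have hκ₁ : Cardinal.aleph 1 < κ := (aleph_lt_aleph.2 one_lt_two).trans_le hκ
  have hScof : ∀ α ∈ S, α.cof = ℵ₀ := fun α hα => (hS hα).2
  obtain ⟨I, hIκ, -, -, hcof, ⟨D, hDI, hD⟩, hIstat⟩ := hRP _ (fun x hx => ⟨hx.1, hx.2.1⟩)
    (famStat_setOf_sSup_mem (aleph0_lt_aleph_one.trans hκ₁) hreg hScof hstat)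
  have hIsup : I ⊆ Set.Iic (sSup I) := fun a ha => le_csSup ⟨κ.ord, fun b hb => (hIκ hb).le⟩ ha
  have hsupκ : sSup I < κ.ord := (csSup_le' fun a ha => (hIκ ha).le).lt_of_ne fun h => by
    rw [h, hreg.cof_ord] at hcof
    exact hκ₁.ne' hcof
  exact ⟨sSup I, hsupκ, hcof, ostat_inter_Iio_of_famStat (hcof ▸ aleph0_lt_aleph_one) hIsup hD
    hDI hScof (fun x hx => hx.1.2.2) hIstat⟩
end

section
/- If S ⊆ κ is a stationary set of ordinals of countable cofinality in a regular uncountable cardinal κ, then the set S* = { x ∈ [κ]^ω : sup(x) ∈ S } is stationary in [κ]^ω. -/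
/-!
Let `D` be the set of `δ < κ` closed under `F`, in the sense that `F e < δ` for every finite
`e ⊆ δ`. Regularity bounds the values of `F` on the `< κ` finite subsets of any `α < κ`, so
iterating such a bound `ω` times produces members of `D` above every `β < κ`; together with the
closedness of `D` under suprema, `D` is a club. Pick `δ ∈ S ∩ D` and a countable cofinal
`A ⊆ δ`. The closure of `A` under `F` is countable, stays below `δ` because `δ ∈ D`, and has
supremum `δ` because it contains `A`.
-/

open Ordinal Cardinal Set

universe u

section FinsetClosure

variable {α : Type*} (F : Finset α → α)

def finsetClosureSeq (A : Set α) : ℕ → Set α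
  | 0 => A
  | n + 1 => finsetClosureSeq A n ∪ F '' {e | ↑e ⊆ finsetClosureSeq A n}

def finsetClosure (A : Set α) : Set α :=
  ⋃ n, finsetClosureSeq F A n

variable {F} {A B : Set α}

theorem Set.Countable.setOf_finset_subset {X : Set α} (hX : X.Countable) :
    {e : Finset α | ↑e ⊆ X}.Countable := by
  classical
  have := hX.to_subtype
  refine (countable_range (Finset.map (Function.Embedding.subtype (· ∈ X)))).mono ?_
  intro e he
  exact ⟨e.subtype (· ∈ X), Finset.subtype_map_of_mem he⟩

theorem subset_finsetClosure : A ⊆ finsetClosure F A :=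
  subset_iUnion (finsetClosureSeq F A) 0

theorem monotone_finsetClosureSeq : Monotone (finsetClosureSeq F A) :=
  monotone_nat_of_le_succ fun _ => subset_union_left

theorem map_mem_finsetClosure {e : Finset α} (he : ↑e ⊆ finsetClosure F A) :
    F e ∈ finsetClosure F A := by
  obtain ⟨n, hn⟩ :=
    monotone_finsetClosureSeq.directed_le.exists_mem_subset_of_finset_subset_biUnion he
  exact mem_iUnion_of_mem (n + 1) (Or.inr ⟨e, hn, rfl⟩)

theorem Set.Countable.finsetClosure (hA : A.Countable) : (finsetClosure F A).Countable := by
  refine countable_iUnion fun n => ?_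
  induction n with
  | zero => exact hA
  | succ n ih => exact ih.union (ih.setOf_finset_subset.image F)

theorem finsetClosure_subset (hAB : A ⊆ B) (hB : ∀ e : Finset α, ↑e ⊆ B → F e ∈ B) :
    finsetClosure F A ⊆ B := by
  refine iUnion_subset fun n => ?_
  induction n with
  | zero => exact hAB
  | succ n ih => exact union_subset ih (image_subset_iff.2 fun e he => hB e (he.trans ih))

end FinsetClosure

theorem exists_mem_finset_subset_Iio_of_subset_Iio_csSup {α : Type*}
    [ConditionallyCompleteLinearOrder α] {T : Set α} (hne : T.Nonempty) (hbdd : BddAbove T)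
    {e : Finset α} (he : ↑e ⊆ Iio (sSup T)) : ∃ d ∈ T, ↑e ⊆ Iio d := by
  have hIio : Iio (sSup T) = ⋃ d ∈ T, Iio d := by
    ext a
    simp only [mem_Iio, mem_iUnion, exists_prop, lt_csSup_iff hbdd hne]
  rw [hIio] at he
  exact ((DirectedOn.of_linearOrder T).mono fun _ _ => Iio_subset_Iio)
    |>.exists_mem_subset_of_finset_subset_biUnion hne he

theorem Cardinal.mk_finset_lt {α : Type*} {κ : Cardinal} (hκ : ℵ₀ ≤ κ) (h : #α < κ) :
    #(Finset α) < κ := by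
  cases finite_or_infinite α
  · exact (lt_aleph0_of_finite _).trans_le hκ
  · rwa [mk_finset_of_infinite]

theorem exists_countable_subset_Iio_sSup_eq_of_cof_eq_aleph0 {δ : Ordinal.{u}}
    (h : δ.cof = ℵ₀) :
    ∃ A : Set Ordinal, A.Countable ∧ A ⊆ Iio δ ∧ sSup A = δ := by
  obtain ⟨f, hf⟩ := exists_isFundamentalSeq (o := δ) (a := ω) (by rw [h, ord_aleph0])
  have : Countable (Iio ω) := by
    rw [← mk_le_aleph0_iff, Cardinal.mk_Iio_ordinal, card_omega0, lift_aleph0]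
  refine ⟨range fun i => (f i).1, countable_range _, ?_, ?_⟩
  · rintro _ ⟨i, rfl⟩
    exact (f i).2
  · rw [sSup_range]
    exact hf.iSup_eq one_lt_omega0

def ClosedBelow (F : Finset Ordinal.{u} → Ordinal.{u}) (δ : Ordinal.{u}) : Prop :=
  ∀ e : Finset Ordinal, ↑e ⊆ Iio δ → F e < δ

section ClosedBelow

variable {F : Finset Ordinal.{u} → Ordinal.{u}}

theorem ClosedBelow.csSup {T : Set Ordinal} (hne : T.Nonempty) (hbdd : BddAbove T)
    (hT : ∀ d ∈ T, ClosedBelow F d) : ClosedBelow F (sSup T) := by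
  intro e he
  obtain ⟨d, hdT, hed⟩ := exists_mem_finset_subset_Iio_of_subset_Iio_csSup hne hbdd he
  exact (hT d hdT e hed).trans_le (le_csSup hbdd hdT)

theorem closedBelow_nfp {b : Ordinal → Ordinal} {a : Ordinal}
    (hb : ∀ n, ∀ e : Finset Ordinal, ↑e ⊆ Iio (b^[n] a) → F e < b (b^[n] a)) :
    ClosedBelow F (nfp b a) := by
  intro e he
  rw [← iSup_iterate_eq_nfp, iSup] at he
  obtain ⟨_, ⟨n, rfl⟩, hen⟩ := exists_mem_finset_subset_Iio_of_subset_Iio_csSup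
    (range_nonempty _) Ordinal.bddAbove_of_small he
  calc F e < b (b^[n] a) := hb n e hen
    _ = b^[n + 1] a := (Function.iterate_succ_apply' b n a).symm
    _ ≤ nfp b a := iterate_le_nfp b a (n + 1)

variable {κ : Cardinal.{u}} (hκ : κ.IsRegular)
  (hF : ∀ e : Finset Ordinal, ↑e ⊆ Iio κ.ord → F e < κ.ord)
include hκ hF

theorem Cardinal.IsRegular.exists_bound_lt_ord {α : Ordinal.{u}} (hα : α < κ.ord) :
    ∃ b < κ.ord, α < b ∧ ∀ e : Finset Ordinal, ↑e ⊆ Iio α → F e < b := by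
  let ι := {e : Finset Ordinal.{u} // ∀ a ∈ e, a < α}
  have hι : Cardinal.lift.{u} #ι < (Ordinal.lift.{u + 1} κ.ord).cof := by
    rw [← lift_cof, hκ.cof_ord, ← (Equiv.finsetSubtypeComm (· < α)).cardinal_eq,
      lift_id'.{u, u + 1}]
    refine mk_finset_lt (aleph0_le_lift.2 hκ.aleph0_le) ?_
    exact (Cardinal.mk_Iio_ordinal α).trans_lt (lift_lt.2 (lt_ord.1 hα))
  have hFι : ∀ i : ι, F i < κ.ord := fun i => hF i fun a ha => (i.2 a ha).trans hα
  have hbdd : BddAbove (range fun i : ι => F i + 1) :=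
    ⟨κ.ord, by rintro _ ⟨i, rfl⟩; exact Order.add_one_le_of_lt (hFι i)⟩
  refine ⟨max (α + 1) (⨆ i : ι, F i + 1), max_lt ?_ (lift_iSup_add_one_lt_of_lt_cof hι hFι),
    lt_max_of_lt_left (lt_add_one α), fun e he => ?_⟩
  · exact (isSuccLimit_ord hκ.aleph0_le).add_one_lt hα
  · exact lt_max_of_lt_right ((lt_add_one _).trans_le (le_ciSup hbdd ⟨e, he⟩))

theorem Cardinal.IsRegular.exists_closedBelow_gt (hκ' : κ ≠ ℵ₀) {β : Ordinal.{u}}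
    (hβ : β < κ.ord) : ∃ δ < κ.ord, β < δ ∧ ClosedBelow F δ := by
  choose! b hbκ hgt hbF using fun α (hα : α < κ.ord) => hκ.exists_bound_lt_ord hF hα
  have hiter : ∀ n, b^[n] β < κ.ord := by
    intro n
    induction n with
    | zero => exact hβ
    | succ n ih => exact (Function.iterate_succ_apply' b n β) ▸ hbκ _ ih
  exact ⟨nfp b β, nfp_lt_ord_of_isRegular hκ hκ' hbκ hβ,
    (hgt β hβ).trans_le (iterate_le_nfp b β 1), closedBelow_nfp fun n => hbF _ (hiter n)⟩

end ClosedBelow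

theorem oclub_closedBelow {κ : Cardinal.{0}} (hκ : κ.IsRegular) (hκ' : ℵ₀ < κ)
    {F : Finset Ordinal.{0} → Ordinal.{0}}
    (hF : ∀ e : Finset Ordinal, ↑e ⊆ Iio κ.ord → F e < κ.ord) :
    OClub κ.ord {δ | δ < κ.ord ∧ ClosedBelow F δ} := by
  refine ⟨fun δ hδ => hδ.1, fun β hβ => ?_, fun δ hδ hne hsup => ⟨hδ, ?_⟩⟩
  · obtain ⟨δ, hδκ, hβδ, hδF⟩ := hκ.exists_closedBelow_gt hF hκ'.ne' hβ
    exact ⟨δ, ⟨hδκ, hδF⟩, hβδ⟩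
  · rw [← hsup]
    exact ClosedBelow.csSup hne ⟨δ, fun d hd => hd.2.le⟩ fun d hd => hd.1.2

theorem sup_preimage_stationary_general (κ : Cardinal.{0})
    (hreg : κ.IsRegular) (hunc : Cardinal.aleph0 < κ)
    (S : Set Ordinal.{0})
    (hcof : ∀ α ∈ S, α.cof = Cardinal.aleph0)
    (hstat : OStat κ.ord S) :
    FamStat (Set.Iio κ.ord) {x : Set Ordinal.{0} | x ⊆ Set.Iio κ.ord ∧ x.Countable ∧ sSup x ∈ S} := by
  intro F hF
  obtain ⟨δ, hδS, hδκ, hδF⟩ := hstat _ (oclub_closedBelow hreg hunc hF)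
  obtain ⟨A, hA, hAδ, hAsup⟩ :=
    exists_countable_subset_Iio_sSup_eq_of_cof_eq_aleph0 (hcof δ hδS)
  have hxδ : finsetClosure F A ⊆ Iio δ := finsetClosure_subset hAδ hδF
  have hxκ : finsetClosure F A ⊆ Iio κ.ord := hxδ.trans (Iio_subset_Iio hδκ.le)
  have hsup : sSup (finsetClosure F A) = δ :=
    (csSup_le' fun _ hy => (hxδ hy).le).antisymm
      (hAsup ▸ csSup_le_csSup' ⟨δ, fun _ hy => (hxδ hy).le⟩ subset_finsetClosure)
  exact ⟨finsetClosure F A, ⟨hxκ, hA.finsetClosure, hsup ▸ hδS⟩, hxκ, hA.finsetClosure,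
    fun _ => map_mem_finsetClosure⟩

/-- If `S` is a stationary subset of a regular uncountable cardinal `κ`
consisting of ordinals of countable cofinality, then
`S* = { x ∈ [κ]^ω : sup x ∈ S }` is stationary in `[κ]^ω`. -/
theorem sup_preimage_stationary (κ : Cardinal.{0})
    (hreg : κ.IsRegular) (hunc : Cardinal.aleph0 < κ)
    (S : Set Ordinal.{0}) (hsub : S ⊆ Set.Iio κ.ord)
    (hcof : ∀ α ∈ S, α.cof = Cardinal.aleph0)
    (hstat : OStat κ.ord S) :
    FamStat (Set.Iio κ.ord) {x : Set Ordinal.{0} | x ⊆ Set.Iio κ.ord ∧ x.Countable ∧ sSup x ∈ S} :=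
  sup_preimage_stationary_general κ hreg hunc S hcof hstat
end

section
/- If κ is a weakly compact cardinal, then every almost-free abelian group of size κ is free: if G is an abelian group of cardinality κ such that every subgroup of cardinality less than κ is a free abelian group, then G itself is free. -/
/-!
Enumerate `G` in order type `κ` and let `G_ξ` be the subgroup generated by the first `ξ`
elements. Each `G_ξ` has fewer than `κ` elements, so it is free, with a basis `B_ξ`.

Using the partition property, patterns that are lexicographically monotone along a homogeneous
set converge; this gives the tree property, hence a `κ`-complete filter on `κ` deciding any `κ`
prescribed sets. Functions `κ → κ` compared eventually along such a filter form a well-founded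
order, and a minimal `f` tending to infinity makes every regressive function bounded on almost
all `f α` (a Fodor-type argument). Applied to the stage at which the support of `g` in `B_{f α}`
appears, this pins that support to a fixed finite set for almost all `α`. Hence the elements lying
in `B_{f α}` for almost all `α` form a basis of `G`.
-/

universe u

/-- A cardinal `κ` is weakly compact if it is (strongly) inaccessible and satisfies the
partition property `κ → (κ)²₂`: every 2-coloring of pairs of ordinals below `κ` has a
homogeneous set of size `κ`. -/
def IsWeaklyCompact (κ : Cardinal.{u}) : Prop :=
  κ.IsInaccessible ∧
  ∀ c : κ.ord.ToType → κ.ord.ToType → Bool,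
    ∃ H : Set κ.ord.ToType, Cardinal.mk ↥H = κ ∧
      ∀ x ∈ H, ∀ y ∈ H, x < y → ∀ x' ∈ H, ∀ y' ∈ H, x' < y' → c x y = c x' y'

open Cardinal Set Filter Order Function Submodule

theorem Pi.Lex.monotone_toLex_domRestrict {ι β : Type*} [LinearOrder ι] [PartialOrder β]
    {s : Set ι} (hs : IsLowerSet s) :
    Monotone fun p : Lex (ι → β) => toLex (s.domRestrict (ofLex p)) := by
  intro p q h
  rcases h.eq_or_lt with h | ⟨i, hpq, hi⟩
  · rw [h]
  by_cases his : i ∈ s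
  · exact le_of_lt ⟨⟨i, his⟩, fun j hj => hpq j hj, hi⟩
  · refine le_of_eq (congrArg toLex (funext fun j => hpq j ?_))
    exact lt_of_not_ge fun hij => his (hs hij j.2)

section ToType

variable {κ : Cardinal.{u}}

theorem mk_Iio_toType_lt (ξ : κ.ord.ToType) : #(Iio ξ) < κ := by
  simpa using mk_Iio_lt ξ

theorem mk_Iio_toType_arrow_bool_lt (hκ : κ.IsStrongPrelimit) (ξ : κ.ord.ToType) :
    #(Iio ξ → Bool) < κ := by
  simpa [← power_def] using hκ (mk_Iio_toType_lt ξ)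

theorem isCofinal_of_le_mk {S : Set κ.ord.ToType} (hS : κ ≤ #S) : IsCofinal S := by
  by_contra h
  obtain ⟨x, hx⟩ := not_isCofinal_iff.1 h
  exact ((hS.trans (mk_le_mk_of_subset hx)).trans_lt (mk_Iio_toType_lt x)).false

theorem Cardinal.IsRegular.cof_toType (hκ : κ.IsRegular) : Order.cof κ.ord.ToType = κ := by
  rw [Ordinal.cof_toType, hκ.cof_ord]

theorem Cardinal.IsRegular.exists_forall_lt_of_mk_lt (hκ : κ.IsRegular) {S : Set κ.ord.ToType}
    (hS : #S < κ) : ∃ x, ∀ y ∈ S, y < x :=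
  not_isCofinal_iff.1 fun h => ((cof_le h).trans_lt (hS.trans_eq hκ.cof_toType.symm)).false

end ToType

namespace Filter

theorem wellFounded_eventually_lt {α β : Type*} {l : Filter α} [CountableInterFilter l]
    [l.NeBot] [Preorder β] [WellFoundedLT β] :
    WellFounded fun f g : α → β => ∀ᶠ a in l, f a < g a := by
  rw [wellFounded_iff_isEmpty_descending_chain]
  refine ⟨fun ⟨f, hf⟩ => ?_⟩
  obtain ⟨a, ha⟩ := (eventually_countable_forall.2 hf).exists
  exact not_strictAnti_of_wellFoundedLT (fun n => f n a) (strictAnti_nat_of_succ_lt ha)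

theorem exists_tendsto_atTop_forall_eventually_lt {α β ι : Type*} {l : Filter α}
    [CountableInterFilter l] [l.NeBot] [LinearOrder β] [WellFoundedLT β] {r : ι → β → β}
    (hr : ∀ i, ∀ᶠ x in atTop, r i x < x) {F : Set (α → β)} (hF : ∀ φ ∈ F, ∀ i, r i ∘ φ ∈ F)
    (hdec : ∀ φ ∈ F, ∀ b, EventuallyConst (fun a => b ≤ φ a) l) {φ₀ : α → β} (hφ₀F : φ₀ ∈ F)
    (hφ₀ : Tendsto φ₀ l atTop) :
    ∃ φ ∈ F, Tendsto φ l atTop ∧ ∀ i, ∃ b, ∀ᶠ a in l, r i (φ a) < b := by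
  obtain ⟨φ, ⟨hφF, hφ⟩, hmin⟩ :=
    (wellFounded_eventually_lt (l := l)).has_min {φ ∈ F | Tendsto φ l atTop} ⟨φ₀, hφ₀F, hφ₀⟩
  refine ⟨φ, hφF, hφ, fun i => ?_⟩
  have hunb : ¬Tendsto (r i ∘ φ) l atTop := fun h => hmin _ ⟨hF φ hφF i, h⟩ (hφ.eventually (hr i))
  obtain ⟨b, hb⟩ := not_forall.1 (mt tendsto_atTop.2 hunb)
  refine ⟨b, ((eventuallyConst_pred.1 (hdec _ (hF φ hφF i) b)).resolve_left hb).mono ?_⟩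
  exact fun a => lt_of_not_ge

theorem exists_eventually_eq_of_eventuallyConst_mem {κ : Cardinal.{u}} {α β : Type u}
    {l : Filter α} [CardinalInterFilter l κ] {F : α → Set β} {C : Set β} (hC : #C < κ)
    (hFC : ∀ᶠ a in l, F a ⊆ C) (hdec : ∀ x ∈ C, EventuallyConst (fun a => x ∈ F a) l) :
    ∃ T, ∀ᶠ a in l, F a = T := by
  refine ⟨{x ∈ C | ∀ᶠ a in l, x ∈ F a}, ?_⟩
  have hmem : ∀ᶠ a in l, ∀ x ∈ C, (x ∈ F a ↔ ∀ᶠ a in l, x ∈ F a) := by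
    refine (eventually_cardinal_ball hC).2 fun x hx => ?_
    rcases eventuallyConst_pred.1 (hdec x hx) with h | h
    · exact h.mono fun a ha => iff_of_true ha h
    · by_cases hl : ∀ᶠ a in l, x ∈ F a
      · exact hl.mono fun a ha => iff_of_true ha hl
      · exact h.mono fun a ha => iff_of_false ha hl
  filter_upwards [hFC, hmem] with a hFaC ha
  ext x
  exact ⟨fun hx => ⟨hFaC hx, (ha x (hFaC hx)).1 hx⟩, fun ⟨hxC, hx⟩ => (ha x hxC).2 hx⟩

end Filter

namespace IsWeaklyCompact

variable {κ : Cardinal.{u}}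

theorem exists_monotoneOn_or_antitoneOn (hκ : IsWeaklyCompact κ) {β : Type*} [LinearOrder β]
    (f : κ.ord.ToType → β) :
    ∃ H : Set κ.ord.ToType, #H = κ ∧ (MonotoneOn f H ∨ AntitoneOn f H) := by
  obtain ⟨H, hHκ, hom⟩ := hκ.2 fun x y => decide (f x ≤ f y)
  refine ⟨H, hHκ, ?_⟩
  by_cases hup : ∃ x ∈ H, ∃ y ∈ H, x < y ∧ f x ≤ f y
  · obtain ⟨x, hx, y, hy, hxy, hfxy⟩ := hup
    refine Or.inl fun a ha b hb hab => ?_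
    rcases hab.eq_or_lt with rfl | hab
    · exact le_rfl
    · simpa [hfxy] using hom a ha b hb hab x hx y hy hxy
  · push Not at hup
    exact Or.inr fun a ha b hb hab => hab.eq_or_lt.elim (fun h => h ▸ le_rfl)
      fun hab => (hup a ha b hb hab).le

theorem exists_branch (hκ : IsWeaklyCompact κ) (p : κ.ord.ToType → κ.ord.ToType → Bool) :
    ∃ h : κ.ord.ToType → Bool, ∀ ξ, ∃ δ, ξ ≤ δ ∧ EqOn (p δ) h (Iio ξ) := by
  have := noMaxOrder hκ.1.isRegular.aleph0_le
  obtain ⟨H, hHκ, hmono⟩ := hκ.exists_monotoneOn_or_antitoneOn fun δ => toLex (p δ)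
  have hH : IsCofinal H := isCofinal_of_le_mk hHκ.ge
  have : Nonempty H := by
    obtain ⟨ξ⟩ := nonempty_ord_toType hκ.1.ne_zero
    obtain ⟨δ, hδ, -⟩ := hH ξ
    exact ⟨⟨δ, hδ⟩⟩
  -- Restricted to `Iio ξ`, the patterns along `H` are still lexicographically monotone or
  -- antitone, and take fewer than `κ = cof H` values.
  have hconst : ∀ ξ, EventuallyConst (fun δ : H => (Iio ξ).domRestrict (p δ)) atTop := by
    intro ξ
    have hsmall : lift.{u} #(Lex (Iio ξ → Bool)) < lift.{u} (Order.cof H) := by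
      rw [lift_id, lift_id, cof_eq_of_isCofinal hH, hκ.1.isRegular.cof_toType]
      exact mk_Iio_toType_arrow_bool_lt hκ.1.isStrongPrelimit ξ
    have hres := Pi.Lex.monotone_toLex_domRestrict (β := Bool) (isLowerSet_Iio ξ)
    rcases hmono with hm | hm
    · exact (EventuallyConst.of_monotone_of_lt_cof
        (hres.comp (monotoneOn_iff_monotone.1 hm)) hsmall).comp ofLex
    · exact (EventuallyConst.of_antitone_of_lt_cof
        (hres.comp_antitone (antitoneOn_iff_antitone.1 hm)) hsmall).comp ofLex
  have hcoord : ∀ i, ∃ b, ∀ᶠ δ : H in atTop, p δ i = b := by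
    intro i
    obtain ⟨ξ, hiξ⟩ := exists_gt i
    exact ((hconst ξ).comp fun q => q ⟨i, hiξ⟩).eventuallyEq_const
  choose h hh using hcoord
  refine ⟨h, fun ξ => ?_⟩
  obtain ⟨c, hc⟩ := (hconst ξ).eventuallyEq_const
  have hch : ∀ i (hi : i < ξ), c ⟨i, hi⟩ = h i := fun i hi => by
    obtain ⟨δ, hδc, hδh⟩ := (hc.and (hh i)).exists
    exact (congrFun hδc ⟨i, hi⟩).symm.trans hδh
  obtain ⟨δ₀, hδ₀H, hξδ₀⟩ := hH ξ
  obtain ⟨δ, hδ, hδc⟩ := ((eventually_ge_atTop (⟨δ₀, hδ₀H⟩ : H)).and hc).exists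
  exact ⟨δ, hξδ₀.trans hδ, fun i hi => (congrFun hδc ⟨i, hi⟩).trans (hch i hi)⟩

theorem exists_le_mk_eqOn (hκ : IsWeaklyCompact κ) (p : κ.ord.ToType → κ.ord.ToType → Bool) :
    ∃ h : κ.ord.ToType → Bool, ∀ ξ, κ ≤ #{a | EqOn (p a) h (Iio ξ)} := by
  have hrep : ∀ δ, ∃ u, κ ≤ #{a | EqOn (p a) (p u) (Iio δ)} := by
    intro δ
    obtain ⟨c, hc⟩ := infinite_pigeonhole_card (fun a => (Iio δ).domRestrict (p a)) κ
      (mk_ord_toType κ).ge hκ.1.isRegular.aleph0_le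
      (hκ.1.isRegular.cof_ord.symm ▸ mk_Iio_toType_arrow_bool_lt hκ.1.isStrongPrelimit δ)
    obtain ⟨⟨u, hu⟩⟩ := mk_ne_zero_iff.1 (hκ.1.pos.trans_le hc).ne'
    refine ⟨u, hc.trans (mk_le_mk_of_subset fun a ha => ?_)⟩
    exact domRestrict_eq_domRestrict_iff.1 (ha.trans hu.symm)
  choose u hu using hrep
  obtain ⟨h, hh⟩ := hκ.exists_branch fun δ => p (u δ)
  refine ⟨h, fun ξ => ?_⟩
  obtain ⟨δ, hξδ, hδ⟩ := hh ξ
  refine (hu δ).trans (mk_le_mk_of_subset fun a ha => ?_)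
  exact (ha.mono (Iio_subset_Iio hξδ)).trans hδ

theorem exists_cardinalInterFilter (hκ : IsWeaklyCompact κ) {ι : Type u} (hι : #ι ≤ κ)
    (A : ι → Set κ.ord.ToType) :
    ∃ l : Filter κ.ord.ToType, CardinalInterFilter l κ ∧ (∀ s ∈ l, κ ≤ #s) ∧
      ∀ i, EventuallyConst (· ∈ A i) l := by
  have := noMaxOrder hκ.1.isRegular.aleph0_le
  obtain ⟨j⟩ := Cardinal.le_def _ _ |>.1 (hι.trans_eq (mk_ord_toType κ).symm)
  classical
  obtain ⟨h, hh⟩ := hκ.exists_le_mk_eqOn fun a i => decide (a ∈ extend j A (fun _ => univ) i)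
  set X : κ.ord.ToType → Set κ.ord.ToType :=
    fun ξ => {a | EqOn (fun i => decide (a ∈ extend j A (fun _ => univ) i)) h (Iio ξ)}
  have hXanti : Antitone X := fun ξ ζ hξζ a ha => ha.mono (Iio_subset_Iio hξζ)
  let l : Filter κ.ord.ToType := Filter.ofCardinalInter {s | ∃ ξ, X ξ ⊆ s}
    ((natCast_lt_aleph0 (n := 2)).trans hκ.1.aleph0_lt)
    (fun S hS hSl => by
      choose ξ hξ using fun s : S => hSl s.2
      obtain ⟨ζ, hζ⟩ := hκ.1.isRegular.exists_forall_lt_of_mk_lt (mk_range_le.trans_lt hS)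
      exact ⟨ζ, subset_sInter fun s hs =>
        (hXanti (hζ _ ⟨⟨s, hs⟩, rfl⟩).le).trans (hξ ⟨s, hs⟩)⟩)
    (fun s t ⟨ξ, hξ⟩ hst => ⟨ξ, hξ.trans hst⟩)
  refine ⟨l, cardinalInter_ofCardinalInter ..,
    fun s ⟨ξ, hξ⟩ => (hh ξ).trans (mk_le_mk_of_subset hξ), fun i => ?_⟩
  obtain ⟨ξ, hξ⟩ := exists_gt (j i)
  have hdec : ∀ a ∈ X ξ, (a ∈ A i ↔ h (j i) = true) := fun a ha => by
    rw [← ha hξ]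
    simp only [j.injective.extend_apply, decide_eq_true_iff]
  rw [eventuallyConst_pred]
  cases hji : h (j i)
  · exact Or.inr ⟨ξ, fun a ha => by simpa [hji] using hdec a ha⟩
  · exact Or.inl ⟨ξ, fun a ha => by simpa [hji] using hdec a ha⟩

theorem exists_filter_tendsto (hκ : IsWeaklyCompact κ) {ι ι' : Type u} (hι : #ι ≤ κ)
    (hι' : #ι' ≤ κ) {r : ι → κ.ord.ToType → κ.ord.ToType} (hr : ∀ i, ∀ᶠ x in atTop, r i x < x)
    (D : ι' → Set κ.ord.ToType) :
    ∃ (l : Filter κ.ord.ToType) (f : κ.ord.ToType → κ.ord.ToType), CardinalInterFilter l κ ∧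
      l.NeBot ∧ Tendsto f l atTop ∧ (∀ i, ∃ b, ∀ᶠ a in l, r i (f a) < b) ∧
      ∀ j, EventuallyConst (fun a => f a ∈ D j) l := by
  have hκ₀ : ℵ₀ ≤ κ := hκ.1.isRegular.aleph0_le
  -- The decided sets are pulled back along all compositions of the `r i`, so that the
  -- minimality argument stays within the functions whose behaviour `l` decides.
  let comp : List ι → κ.ord.ToType → κ.ord.ToType := fun w => (w.map r).foldr (· ∘ ·) id
  let A : List ι × (κ.ord.ToType ⊕ ι') → Set κ.ord.ToType
    | (w, .inl b) => {a | b ≤ comp w a}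
    | (w, .inr j) => comp w ⁻¹' D j
  have hA : #(List ι × (κ.ord.ToType ⊕ ι')) ≤ κ := by
    simp only [mk_prod, mk_sum, lift_id, mk_ord_toType]
    exact mul_le_of_le hκ₀ ((mk_list_le_max ι).trans (max_le hκ₀ hι)) (add_le_of_le hκ₀ le_rfl hι')
  obtain ⟨l, hl, hlκ, hdec⟩ := hκ.exists_cardinalInterFilter hA A
  have := hl.toCountableInterFilter l hκ.1.aleph0_lt
  have : l.NeBot :=
    ⟨fun h => ((hlκ ∅ (empty_mem_iff_bot.2 h)).trans_lt (by simpa using hκ.1.pos)).false⟩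
  have hid : Tendsto id l atTop := by
    refine tendsto_atTop.2 fun b => (eventuallyConst_pred.1 (hdec ([], .inl b))).resolve_right
      fun h => ((hlκ _ h).trans_lt ?_).false
    exact (mk_le_mk_of_subset fun a (ha : ¬b ≤ a) => not_le.1 ha).trans_lt (mk_Iio_toType_lt b)
  obtain ⟨φ, ⟨w, rfl⟩, hφ, hbdd⟩ := exists_tendsto_atTop_forall_eventually_lt hr (F := range comp)
    (by rintro _ ⟨w, rfl⟩ i; exact ⟨i :: w, rfl⟩) (by rintro _ ⟨w, rfl⟩ b; exact hdec (w, .inl b))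
    ⟨[], rfl⟩ hid
  exact ⟨l, comp w, hl, inferInstance, hφ, hbdd, fun j => hdec (w, .inr j)⟩

end IsWeaklyCompact

theorem Module.Free.of_eventually_subset {ι R M : Type*} [Semiring R] [AddCommMonoid M]
    [Module R M] {l : Filter ι} [l.NeBot] {B : ι → Set M} (hB : ∀ i, LinearIndepOn R id (B i))
    (hspan : ∀ x : M, ∃ T : Set M, x ∈ span R T ∧ ∀ᶠ i in l, T ⊆ B i) : Module.Free R M := by
  let V : Set M := {v | ∀ᶠ i in l, v ∈ B i}
  have hV : LinearIndepOn R id V := linearIndepOn_of_finite _ fun t htV ht => by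
    obtain ⟨i, hi⟩ := (ht.eventually_all.2 fun v hv => htV hv).exists
    exact (hB i).mono hi
  refine Module.Free.of_basis (Module.Basis.mk hV.linearIndependent fun x _ => ?_)
  obtain ⟨T, hxT, hT⟩ := hspan x
  rw [show (range fun v : V => id (v : M)) = V from Subtype.range_coe]
  exact span_mono (R := R) (show T ⊆ V from fun v hv => hT.mono fun i hi => hi hv) hxT

theorem Submodule.exists_linearIndepOn_span_eq {R M : Type*} [Ring R] [AddCommGroup M]
    [Module R M] (S : Submodule R M) [Module.Free R S] :
    ∃ B : Set M, LinearIndepOn R id B ∧ span R B = S := by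
  let b := Module.Free.chooseBasis R S
  refine ⟨range (S.subtype ∘ b), ?_, ?_⟩
  · exact (b.linearIndependent.map' _ S.ker_subtype).linearIndepOn_id
  · rw [range_comp, span_image, b.span_eq, map_subtype_top]

theorem mk_span_int_lt {κ : Cardinal.{u}} {M : Type u} [AddCommGroup M] (hκ : ℵ₀ < κ)
    {s : Set M} (hs : #s < κ) : #(span ℤ s) < κ := by
  classical
  have hrange : #(span ℤ s) ≤ #(s →₀ ℤ) := by
    have h := Finsupp.range_linearCombination ℤ (v := ((↑) : s → M))
    rw [Subtype.range_coe] at h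
    rw [← h]
    exact mk_le_of_surjective (LinearMap.surjective_rangeRestrict _)
  have hlist : #(s →₀ ℤ) ≤ #(List (s × ℤ)) :=
    (mk_le_of_injective (Finsupp.graph_injective _ _)).trans
      (mk_le_of_surjective List.toFinset_surjective)
  refine hrange.trans_lt (hlist.trans_lt ((mk_list_le_max _).trans_lt (max_lt hκ ?_)))
  simpa using mul_lt_of_lt hκ.le hs hκ

theorem exists_lt_subset_span_image_Iic {ι R M : Type*} [LinearOrder ι] [Semiring R]
    [AddCommMonoid M] [Module R M] (v : ι → M) {ξ : ι} (hξ : ¬IsMin ξ) {T : Set M}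
    (hT : T.Finite) (hTξ : T ⊆ span R (v '' Iio ξ)) : ∃ η < ξ, T ⊆ span R (v '' Iic η) := by
  have hIio : (⋃ η : Iio ξ, Iic (η : ι)) = Iio ξ := by
    ext x
    simp only [mem_iUnion, mem_Iic, Subtype.exists, mem_Iio, exists_prop]
    exact ⟨fun ⟨η, hη, hxη⟩ => hxη.trans_lt hη, fun hx => ⟨x, hx, le_rfl⟩⟩
  obtain ⟨η₀, hη₀⟩ := not_isMin_iff.1 hξ
  have : Nonempty (Iio ξ) := ⟨⟨η₀, hη₀⟩⟩
  have hle : span R T ≤ ⨆ η : Iio ξ, span R (v '' Iic (η : ι)) := by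
    rw [← span_iUnion, ← image_iUnion, hIio]
    exact span_le.2 hTξ
  obtain ⟨s, hs⟩ := CompleteLattice.IsCompactElement.exists_finset_of_le_iSup _
    (finite_span_isCompactElement T hT) _ hle
  obtain ⟨η, hη⟩ := s.exists_le
  have hsη : ⨆ i ∈ s, span R (v '' Iic (i : ι)) ≤ span R (v '' Iic (η : ι)) :=
    iSup₂_le fun i hi => span_mono (image_mono (Iic_subset_Iic.2 (hη i hi)))
  exact ⟨η, η.2, subset_span.trans (hs.trans hsη)⟩

theorem Module.free_of_free_span_image_Iio {κ : Cardinal.{u}} (hκ : IsWeaklyCompact κ)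
    {G : Type u} [AddCommGroup G] {e : κ.ord.ToType → G} (he : Surjective e)
    (hfree : ∀ ξ, Module.Free ℤ (span ℤ (e '' Iio ξ))) : Module.Free ℤ G := by
  have hκ₀ : ℵ₀ ≤ κ := hκ.1.isRegular.aleph0_le
  have := noMaxOrder hκ₀
  obtain ⟨ξ₀⟩ := nonempty_ord_toType hκ.1.ne_zero
  choose B hBind hBspan using fun ξ =>
    have := hfree ξ
    (span ℤ (e '' Iio ξ)).exists_linearIndepOn_span_eq
  have hBsub : ∀ ξ, B ξ ⊆ span ℤ (e '' Iio ξ) := fun ξ => hBspan ξ ▸ subset_span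
  have hsupp : ∀ (g : G) ξ,
      ∃ T : Finset G, ↑T ⊆ B ξ ∧ (g ∈ span ℤ (e '' Iio ξ) → g ∈ span ℤ ↑T) := by
    intro g ξ
    by_cases hg : g ∈ span ℤ (e '' Iio ξ)
    · obtain ⟨T, hTB, hgT⟩ := mem_span_finite_of_mem_span (hBspan ξ ▸ hg)
      exact ⟨T, hTB, fun _ => hgT⟩
    · exact ⟨∅, by simp, fun h => (hg h).elim⟩
  choose T hTB hT using hsupp
  have hstage : ∀ g ξ, ∃ η, (¬IsMin ξ → η < ξ) ∧ (T g ξ : Set G) ⊆ span ℤ (e '' Iic η) := by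
    intro g ξ
    by_cases hξ : IsMin ξ
    · exact ⟨ξ, fun h => (h hξ).elim,
        ((hTB g ξ).trans (hBsub ξ)).trans (span_mono (image_mono Iio_subset_Iic_self))⟩
    · obtain ⟨η, hη, h⟩ := exists_lt_subset_span_image_Iic e hξ (T g ξ).finite_toSet
        ((hTB g ξ).trans (hBsub ξ))
      exact ⟨η, fun _ => hη, h⟩
  choose ρ hρ hTρ using hstage
  have hG : #G ≤ κ := (mk_le_of_surjective he).trans_eq (mk_ord_toType κ)
  obtain ⟨l, f, hl, hne, hf, hbdd, hdec⟩ := hκ.exists_filter_tendsto hG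
    (by simpa using mul_le_of_le hκ₀ hG hG)
    (fun g => (eventually_gt_atTop ξ₀).mono fun ξ h => hρ g ξ (not_isMin_of_lt h))
    fun p : G × G => {ξ | p.2 ∈ T p.1 ξ}
  refine Module.Free.of_eventually_subset (l := l) (fun a => hBind (f a)) fun g => ?_
  obtain ⟨b, hb⟩ := hbdd g
  obtain ⟨T₀, hT₀⟩ := exists_eventually_eq_of_eventuallyConst_mem (F := fun a => ↑(T g (f a)))
    (mk_span_int_lt hκ.1.aleph0_lt (mk_image_le.trans_lt (mk_Iio_toType_lt b)))
    (hb.mono fun a ha => (hTρ g _).trans (span_mono (image_mono (Iic_subset_Iio.2 ha))))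
    fun x _ => hdec (g, x)
  obtain ⟨x, rfl⟩ := he g
  refine ⟨T₀, ?_, hT₀.mono fun a ha => ha ▸ hTB _ _⟩
  obtain ⟨a, haT, hxa⟩ := (hT₀.and (hf.eventually (eventually_gt_atTop x))).exists
  exact haT ▸ hT _ _ (subset_span ⟨x, hxa, rfl⟩)

/-- If `κ` is weakly compact, then every almost-free abelian group of size
`κ` is free: if `G` is an abelian group of cardinality `κ` all of whose subgroups of
cardinality `< κ` are free abelian groups, then `G` is a free abelian group. -/
theorem weakly_compact_abelian_compact (κ : Cardinal.{u}) (hκ : IsWeaklyCompact κ)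
    (G : Type u) [AddCommGroup G] (hG : Cardinal.mk G = κ)
    (halmostfree : ∀ H : AddSubgroup G, Cardinal.mk ↥H < κ → Module.Free ℤ H) :
    Module.Free ℤ G := by
  obtain ⟨e⟩ : Nonempty (κ.ord.ToType ≃ G) := Cardinal.eq.1 (by rw [mk_ord_toType, hG])
  refine Module.free_of_free_span_image_Iio hκ e.surjective fun ξ =>
    halmostfree (span ℤ (e '' Iio ξ)).toAddSubgroup ?_
  exact mk_span_int_lt hκ.1.aleph0_lt (mk_image_le.trans_lt (mk_Iio_toType_lt ξ))
end

section
/- If κ is a weakly compact cardinal, then κ is countably chromatically compact: for every graph G on κ vertices, if every induced subgraph on fewer than κ vertices has chromatic number at most ℵ₀, then G itself has chromatic number at most ℵ₀. -/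
universe u

/-!
Index the vertices by `κ.ord.ToType` and fix, for every `β`, a colouring `g β : κ → ℕ` that is
proper below `β`. Colouring a pair `x < y` by whether `g x ≤ g y` lexicographically, the
partition property gives a set `H` of size `κ` on which `g` is lexicographically monotone or
antitone. Restriction to an initial segment is lexicographically monotone, so whenever
`b₁ ≤ b₂ ≤ b₃` lie in `H` and `g b₁`, `g b₃` agree on `Iic α`, so does `g b₂`.
As `κ` is a regular strong limit, there are fewer than `κ` functions `Iic α → ℕ`, so a cofinal
part of `H` shares one restriction to `Iic α`; interleaving elements shows that these cofinal
classes cohere as `α` grows. Gluing them gives a colouring that agrees on every `Iic δ` with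
some `g b`, `b > δ`, and is therefore proper.
-/

open Cardinal Set

theorem Pi.toLex_domRestrict_le_of_isLowerSet {ι β : Type*} [LinearOrder ι] [PartialOrder β]
    {s : Set ι} (hs : IsLowerSet s) {f g : ι → β} (h : toLex f ≤ toLex g) :
    toLex (s.domRestrict f) ≤ toLex (s.domRestrict g) := by
  obtain h | ⟨i, hi, hlt⟩ := h.eq_or_lt
  · rw [toLex_inj.mp h]
  by_cases his : i ∈ s
  · exact le_of_lt ⟨⟨i, his⟩, fun j hj => hi j hj, hlt⟩
  · refine le_of_eq (congrArg toLex (funext fun j => hi j ?_))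
    exact lt_of_not_ge fun hij => his (hs hij j.2)

theorem Pi.eqOn_of_toLex_le_of_le {ι β : Type*} [LinearOrder ι] [PartialOrder β]
    {s : Set ι} (hs : IsLowerSet s) {f g h : ι → β} (hfg : toLex f ≤ toLex g)
    (hgh : toLex g ≤ toLex h) (hfh : EqOn f h s) : EqOn f g s := by
  rw [← domRestrict_eq_domRestrict_iff] at hfh ⊢
  refine toLex_inj.mp (le_antisymm (toLex_domRestrict_le_of_isLowerSet hs hfg) ?_)
  rw [hfh]
  exact toLex_domRestrict_le_of_isLowerSet hs hgh

theorem Cardinal.IsStrongLimit.power_lt {a b c : Cardinal} (hc : IsStrongLimit c) (ha : a < c)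
    (hb : b < c) : a ^ b < c :=
  calc a ^ b ≤ (2 ^ a) ^ b := power_le_power_right (cantor a).le
    _ = 2 ^ (a * b) := power_mul.symm
    _ < c := hc.isStrongPrelimit (mul_lt_of_lt hc.aleph0_le ha hb)

theorem Cardinal.isCofinal_of_le_mk {c : Cardinal} {s : Set c.ord.ToType} (hs : c ≤ #s) :
    IsCofinal s := by
  by_contra hcof
  obtain ⟨x, hx⟩ := not_isCofinal_iff.mp hcof
  have hIio : #(Iio x) < c := by simpa using mk_Iio_lt x
  exact (hs.trans (mk_le_mk_of_subset hx)).not_gt hIio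

theorem IsWeaklyCompact.exists_monotoneOn_or_antitoneOn_s8 {κ : Cardinal.{u}}
    (hκ : IsWeaklyCompact κ) {α : Type*} [LinearOrder α] (f : κ.ord.ToType → α) :
    ∃ H : Set κ.ord.ToType, #H = κ ∧ (MonotoneOn f H ∨ AntitoneOn f H) := by
  obtain ⟨H, hHκ, hH⟩ := hκ.2 fun x y => decide (f x ≤ f y)
  refine ⟨H, hHκ, or_iff_not_imp_left.mpr fun hmono => ?_⟩
  obtain ⟨a, ha, b, hb, hab, hfab⟩ : ∃ a ∈ H, ∃ b ∈ H, a ≤ b ∧ ¬ f a ≤ f b := by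
    simpa [MonotoneOn] using hmono
  have hab : a < b := hab.lt_of_ne (by rintro rfl; exact hfab le_rfl)
  intro x hx y hy hxy
  obtain rfl | hxy := hxy.eq_or_lt
  · rfl
  · exact (by simpa [hfab] using hH x hx y hy hxy a ha b hb hab : f y < f x).le

section LexMonotone

variable {ι β : Type*} [LinearOrder ι] [PartialOrder β] {g : ι → ι → β} {H : Set ι}

theorem eqOn_of_le_of_le_of_monotoneOn_or_antitoneOn
    (hg : MonotoneOn (toLex ∘ g) H ∨ AntitoneOn (toLex ∘ g) H) {s : Set ι} (hs : IsLowerSet s)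
    {a b c : ι} (ha : a ∈ H) (hb : b ∈ H) (hc : c ∈ H) (hab : a ≤ b) (hbc : b ≤ c)
    (hac : EqOn (g a) (g c) s) : EqOn (g a) (g b) s := by
  rcases hg with hg | hg
  · exact Pi.eqOn_of_toLex_le_of_le hs (hg ha hb hab) (hg hb hc hbc) hac
  · exact hac.trans (Pi.eqOn_of_toLex_le_of_le hs (hg hb hc hbc) (hg ha hb hab) hac.symm)

theorem eqOn_of_isCofinal (hg : MonotoneOn (toLex ∘ g) H ∨ AntitoneOn (toLex ∘ g) H)
    {s t : Set ι} (hs : IsLowerSet s) (hst : s ⊆ t) {F F' : Set ι} (hF : F ⊆ H) (hF' : F' ⊆ H)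
    (hFc : IsCofinal F) (hF'c : IsCofinal F') (hFs : ∀ b ∈ F, ∀ b' ∈ F, EqOn (g b) (g b') s)
    (hF't : ∀ b ∈ F', ∀ b' ∈ F', EqOn (g b) (g b') t) {b b' : ι} (hb : b ∈ F) (hb' : b' ∈ F') :
    EqOn (g b) (g b') s := by
  obtain ⟨b₂, hb₂, hbb₂⟩ := hF'c b
  obtain ⟨b₃, hb₃, hb₂b₃⟩ := hFc b₂
  have hbb₂s : EqOn (g b) (g b₂) s :=
    eqOn_of_le_of_le_of_monotoneOn_or_antitoneOn hg hs (hF hb) (hF' hb₂) (hF hb₃) hbb₂ hb₂b₃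
      (hFs b hb b₃ hb₃)
  exact hbb₂s.trans ((hF't b₂ hb₂ b' hb').mono hst)

end LexMonotone

theorem Cardinal.IsInaccessible.exists_isCofinal_eqOn {κ : Cardinal.{u}} (hκ : κ.IsInaccessible)
    {H : Set κ.ord.ToType} (hH : #H = κ) (g : κ.ord.ToType → κ.ord.ToType → ℕ)
    {s : Set κ.ord.ToType} (hs : #s < κ) :
    ∃ F ⊆ H, IsCofinal F ∧ ∀ b ∈ F, ∀ b' ∈ F, EqOn (g b) (g b') s := by
  have hcard : #(s → ℕ) < κ.ord.cof := by
    rw [hκ.isRegular.cof_ord]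
    simpa using hκ.isStrongLimit.power_lt hκ.aleph0_lt hs
  obtain ⟨u, F, hFH, hFκ, hFu⟩ :=
    infinite_pigeonhole_set (fun b : H => s.domRestrict (g b)) κ hH.ge hκ.aleph0_lt.le hcard
  refine ⟨F, hFH, isCofinal_of_le_mk hFκ, fun b hb b' hb' => ?_⟩
  rw [← domRestrict_eq_domRestrict_iff]
  exact (hFu hb).trans (hFu hb').symm

theorem IsWeaklyCompact.exists_eqOn_Iic {κ : Cardinal.{u}} (hκ : IsWeaklyCompact κ)
    (g : κ.ord.ToType → κ.ord.ToType → ℕ) :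
    ∃ c : κ.ord.ToType → ℕ, ∀ δ, ∃ b, δ < b ∧ EqOn c (g b) (Iic δ) := by
  have := noMaxOrder hκ.1.aleph0_lt.le
  obtain ⟨H, hHκ, hg⟩ := hκ.exists_monotoneOn_or_antitoneOn_s8 (toLex ∘ g)
  have hIic (x : κ.ord.ToType) : #(Iic x) < κ := by
    obtain ⟨y, hy⟩ := exists_gt x
    exact (mk_le_mk_of_subset (Iic_subset_Iio.mpr hy)).trans_lt (by simpa using mk_Iio_lt y)
  choose F hFH hFc hFeq using fun x => hκ.1.exists_isCofinal_eqOn hHκ g (hIic x)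
  choose b hb using fun x => (hFc x x).imp fun _ => And.left
  refine ⟨fun x => g (b x) x, fun δ => ?_⟩
  obtain ⟨δ', hδ'⟩ := exists_gt δ
  obtain ⟨b', hb', hδ'b'⟩ := hFc δ δ'
  refine ⟨b', hδ'.trans_le hδ'b', fun x hx => ?_⟩
  exact eqOn_of_isCofinal hg (isLowerSet_Iic x) (Iic_subset_Iic.mpr hx) (hFH x) (hFH δ)
    (hFc x) (hFc δ) (hFeq x) (hFeq δ) (hb x) hb' (mem_Iic.mpr le_rfl)

theorem IsWeaklyCompact.exists_coloring_of_forall_Iio {κ : Cardinal.{u}}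
    (hκ : IsWeaklyCompact κ) (G : SimpleGraph κ.ord.ToType)
    (hG : ∀ β, ∃ t : κ.ord.ToType → ℕ, ∀ x < β, ∀ y < β, G.Adj x y → t x ≠ t y) :
    ∃ c : κ.ord.ToType → ℕ, ∀ x y, G.Adj x y → c x ≠ c y := by
  choose g hg using hG
  obtain ⟨c, hc⟩ := hκ.exists_eqOn_Iic g
  refine ⟨c, fun x y hxy => ?_⟩
  obtain ⟨b, hb, hcb⟩ := hc (max x y)
  have hx : x ≤ max x y := le_max_left x y
  have hy : y ≤ max x y := le_max_right x y
  rw [hcb hx, hcb hy]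
  exact hg b x (hx.trans_lt hb) y (hy.trans_lt hb) hxy

/-- If `κ` is weakly compact, then `κ` is countably chromatically compact:
for every graph `G` on `κ` vertices, if every induced subgraph on fewer than `κ` vertices
has a proper coloring with countably many colors, then so does `G`. -/
theorem weakly_compact_chromatically_compact (κ : Cardinal.{u}) (hκ : IsWeaklyCompact κ)
    {V : Type u} (G : SimpleGraph V) (hV : Cardinal.mk V = κ)
    (hsub : ∀ S : Set V, Cardinal.mk ↥S < κ →
      ∃ c : S → ℕ, ∀ x y : S, G.Adj ↑x ↑y → c x ≠ c y) :
    ∃ c : V → ℕ, ∀ x y : V, G.Adj x y → c x ≠ c y := by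
  obtain ⟨e⟩ : Nonempty (V ≃ κ.ord.ToType) := Cardinal.eq.mp (by simp [hV])
  obtain ⟨c, hc⟩ := hκ.exists_coloring_of_forall_Iio (G.comap e.symm) fun β => by
    obtain ⟨c, hc⟩ := hsub (e ⁻¹' Iio β) (by simpa [mk_preimage_equiv] using mk_Iio_lt β)
    refine ⟨fun x => if hx : x < β then c ⟨e.symm x, by simpa using hx⟩ else 0,
      fun x hx y hy hxy => ?_⟩
    simpa [hx, hy] using hc ⟨e.symm x, by simpa using hx⟩ ⟨e.symm y, by simpa using hy⟩ hxy
  exact ⟨c ∘ e, fun x y hxy => hc (e x) (e y) (by simpa using hxy)⟩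
end

section
/- If the Fodor-type Reflection Principle FRP(κ) holds for a regular cardinal κ ≥ ω₂, then every stationary subset of { α < κ : cf(α) = ω } reflects at an ordinal of cofinality ω₁. -/
/-- A bounded subset of `κ.ord` of cardinality `ℵ₁` has supremum below `κ.ord`,
for `κ` regular with `ℵ₂ ≤ κ`. -/
theorem sup_lt_aux (κ : Cardinal.{0}) (hreg : κ.IsRegular) (hκ : Cardinal.aleph 2 ≤ κ)
    (I : Set Ordinal.{0}) (hI : I ⊆ Set.Iio κ.ord) (hcard : Cardinal.mk ↥I = Cardinal.aleph 1) :
    sSup I < κ.ord := by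
  have hne : I.Nonempty := by
    rw [Set.nonempty_iff_ne_empty]
    intro h
    rw [h] at hcard
    simp at hcard
    exact (Cardinal.aleph_pos 1).ne' hcard.symm
  have hsmall : Small.{0} ↥I := by
    rw [← Ordinal.bddAbove_iff_small]
    exact ⟨κ.ord, fun a ha => (hI ha).le⟩
  set f : Shrink ↥I → Ordinal.{0} := fun x => ((equivShrink ↥I).symm x : Ordinal) with hf
  have hcard' : Cardinal.mk (Shrink ↥I) = Cardinal.aleph 1 := by
    have h1 : Cardinal.lift.{1,0} (Cardinal.mk (Shrink ↥I)) = Cardinal.mk ↥I := by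
      simp [Cardinal.lift_mk_eq'.2 ⟨(equivShrink ↥I).symm⟩]
    have h2 : Cardinal.lift.{1,0} (Cardinal.aleph 1) = (Cardinal.aleph 1 : Cardinal.{1}) := by
      rw [Cardinal.lift_aleph]; simp
    apply Cardinal.lift_injective.{1,0}
    rw [h1, hcard, h2]
  have hsup : (⨆ x, f x) < κ.ord := by
    refine Cardinal.iSup_lt_ord_of_isRegular hreg ?_ (fun x => hI ((equivShrink ↥I).symm x).2)
    rw [hcard']
    exact lt_of_lt_of_le (Cardinal.aleph_lt_aleph.2 one_lt_two) hκ
  refine lt_of_le_of_lt (csSup_le hne fun a ha => ?_) hsup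
  have : f (equivShrink ↥I ⟨a, ha⟩) = a := by simp [hf]
  rw [← this]
  exact le_ciSup (Ordinal.bddAbove_range.{0,0} f) _

/-- If the Fodor-type Reflection Principle `FRP(κ)` holds for a regular
cardinal `κ ≥ ω₂`, then every stationary subset of `{α < κ | cf(α) = ω}` reflects at an
ordinal of cofinality `ω₁`. -/
theorem FRP_implies_stationary_reflection (κ : Cardinal.{0})
    (hreg : κ.IsRegular) (hκ : Cardinal.aleph 2 ≤ κ)
    (hFRP : ∀ S : Set Ordinal.{0},
      S ⊆ {α | α < κ.ord ∧ α.cof = Cardinal.aleph0} → OStat κ.ord S →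
      ∀ g : Ordinal.{0} → Set Ordinal.{0},
        (∀ α ∈ S, g α ⊆ Set.Iio κ.ord ∧ (g α).Countable) →
        ∃ I : Set Ordinal.{0}, I ⊆ Set.Iio κ.ord ∧
          Cardinal.mk ↥I = Cardinal.aleph 1 ∧
          (sSup I).cof = Cardinal.aleph 1 ∧
          (∀ α ∈ I ∩ S, g α ⊆ I) ∧
          (∃ D ⊆ I, OClub (sSup I) D) ∧
          ∀ f : Ordinal.{0} → Ordinal.{0},
            (∀ α ∈ S ∩ I, f α < α ∧ f α ∈ g α) →
            ∃ ξ : Ordinal.{0}, OStat (sSup I) {α | α ∈ S ∩ I ∧ f α = ξ}) :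
    ∀ S : Set Ordinal.{0}, S ⊆ {α | α < κ.ord ∧ α.cof = Cardinal.aleph0} →
      OStat κ.ord S →
      ∃ γ < κ.ord, γ.cof = Cardinal.aleph 1 ∧ OStat γ (S ∩ Set.Iio γ) := by
  intro S hSsub hSstat
  -- apply FRP with the constant function g α = {0}
  have hzero : (0 : Ordinal.{0}) < κ.ord := by
    rw [Cardinal.lt_ord]
    simpa using lt_of_lt_of_le (Cardinal.aleph_pos 2) hκ
  obtain ⟨I, hIsub, hIcard, hIcof, -, -, hFodor⟩ :=
    hFRP S hSsub hSstat (fun _ => {0})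
      (fun α _ => ⟨by intro x hx; simp at hx; simpa [hx] using hzero,
        Set.countable_singleton 0⟩)
  refine ⟨sSup I, sup_lt_aux κ hreg hκ I hIsub hIcard, hIcof, ?_⟩
  -- use the Fodor property with the constant zero function
  have hf : ∀ α ∈ S ∩ I, (fun _ : Ordinal.{0} => (0 : Ordinal.{0})) α < α ∧
      (fun _ : Ordinal.{0} => (0 : Ordinal.{0})) α ∈ ({0} : Set Ordinal.{0}) := by
    intro α hα
    refine ⟨?_, rfl⟩
    rcases hSsub hα.1 with ⟨-, hcof⟩
    rw [pos_iff_ne_zero]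
    rintro rfl
    simp [Ordinal.cof_zero] at hcof
    exact Cardinal.aleph0_ne_zero hcof.symm
  obtain ⟨ξ, hξ⟩ := hFodor (fun _ => 0) hf
  intro C hC
  obtain ⟨α, ⟨⟨hαS, hαI⟩, -⟩, hαC⟩ := hξ C hC
  exact ⟨α, ⟨hαS, hC.1 hαC⟩, hαC⟩
end
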